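/- Let T and T' be unrooted binary phylogenetic trees on X that cannot be reduced under any of Reductions 1–10, and let G be the generator underlying an unrooted binary phylogenetic network N on X that displays T and T' with r(N) = d_TBR(T,T'). Let s_2 be the number of 2|2 sides of G each decorated with four taxa that are eligible for Operation P, and let s_1 be the number of 1|3 sides of G. Then s_1 + s_2 ≤ 1. -/

import Mathlib

/-!  Basic formalization of unrooted binary phylogenetic trees, chains, cherries,
agreement forests, TBR distance, reduction rules 1-10, phylogenetic networks,
generators (encoded via their sides inside the network), and breakpoint sides. -/

structure PhyloTree (X : Type) : Type 1 where
  V : Type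
  graph : SimpleGraph V
  finV : Finite V
  isTree : graph.IsTree
  leaf : X → V
  leaf_inj : Function.Injective leaf
  deg_leaf : ∀ x : X, (graph.neighborSet (leaf x)).ncard = 1
  deg_internal : ∀ v : V, v ∉ Set.range leaf → (graph.neighborSet v).ncard = 3

namespace PhyloTree

variable {X : Type}

/-- The unique neighbour `p_x` of the leaf labelled `x`. -/
noncomputable def parent (T : PhyloTree X) (x : X) : T.V :=
  (Set.ncard_eq_one.mp (T.deg_leaf x)).choose

/-- `{a,b}` is a cherry: two distinct leaves with a common neighbour. -/
def cherry (T : PhyloTree X) (a b : X) : Prop :=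
  a ≠ b ∧ T.parent a = T.parent b

/-- `l = (l₁,…,lₙ)` is an `n`-chain of `T` (n = l.length ≥ 2): the parents form a
walk (consecutive parents equal or adjacent) whose interior parents are pairwise
distinct. -/
def isChain (T : PhyloTree X) (l : List X) : Prop :=
  2 ≤ l.length ∧ l.Nodup ∧
  (∀ (i : ℕ) (x y : X), l[i]? = some x → l[i + 1]? = some y →
    T.parent x = T.parent y ∨ T.graph.Adj (T.parent x) (T.parent y)) ∧
  (∀ (i j : ℕ) (x y : X), 1 ≤ i → i < j → j + 1 < l.length →
    l[i]? = some x → l[j]? = some y → T.parent x ≠ T.parent y)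

def frontPendant (T : PhyloTree X) (l : List X) : Prop :=
  ∃ x y : X, l[0]? = some x ∧ l[1]? = some y ∧ T.parent x = T.parent y

/-- A chain is pendant if its first two or last two members have equal parents. -/
def pendantChain (T : PhyloTree X) (l : List X) : Prop :=
  T.isChain l ∧ (T.frontPendant l ∨ T.frontPendant l.reverse)

/-- Vertices of the embedding `T[B]`: all vertices on paths between leaves of `B`. -/
def embVerts (T : PhyloTree X) (B : Set X) : Set T.V :=
  {v | ∃ a ∈ B, ∃ b ∈ B, ∃ p : T.graph.Walk (T.leaf a) (T.leaf b), p.IsPath ∧ v ∈ p.support}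

/-- Edges of the embedding `T[B]` (the edges "used by" `T[B]`). -/
def embEdges (T : PhyloTree X) (B : Set X) : Set (Sym2 T.V) :=
  {e | ∃ a ∈ B, ∃ b ∈ B, ∃ p : T.graph.Walk (T.leaf a) (T.leaf b), p.IsPath ∧ e ∈ p.edges}

/-- The quartet `ab|cd` is displayed by `T`. -/
def quartet (T : PhyloTree X) (a b c d : X) : Prop :=
  Disjoint (T.embVerts {a, b}) (T.embVerts {c, d})

/-- `Y` is the leaf set of a pendant subtree of `T`: deleting a single edge
detaches exactly the leaves of `Y`. -/
def pendantSet (T : PhyloTree X) (Y : Set X) : Prop :=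
  ∃ v w : T.V, T.graph.Adj v w ∧
    Y = {x : X | (T.graph.deleteEdges {s(v, w)}).Reachable (T.leaf x) v}

end PhyloTree

/-- The restrictions `T|B` and `T'|B` coincide (expressed via quartets, which
determine binary trees). -/
def restrictEqOn {X : Type} (T T' : PhyloTree X) (B : Set X) : Prop :=
  ∀ a ∈ B, ∀ b ∈ B, ∀ c ∈ B, ∀ d ∈ B, Function.Injective ![a, b, c, d] →
    (T.quartet a b c d ↔ T'.quartet a b c d)

/-- `T` and `T'` are the same phylogenetic tree (equal up to label-preserving
isomorphism). -/
def PhyloTree.equivT {X : Type} (T T' : PhyloTree X) : Prop :=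
  restrictEqOn T T' Set.univ

/-- `T'` is obtainable from `T` by a single TBR operation: there is a bipartition
of `X` which is an edge split of both trees and on both of whose parts the two
trees agree. -/
def TBRStep {X : Type} (T T' : PhyloTree X) : Prop :=
  ∃ A : Set X, A.Nonempty ∧ Aᶜ.Nonempty ∧ T.pendantSet A ∧ T'.pendantSet A ∧
    restrictEqOn T T' A ∧ restrictEqOn T T' Aᶜ

/-- The TBR distance: the minimum number of TBR operations transforming `T` into `T'`. -/
noncomputable def dTBR {X : Type} (T T' : PhyloTree X) : ℕ :=
  sInf {k : ℕ | ∃ f : ℕ → PhyloTree X, (f 0).equivT T ∧ (f k).equivT T' ∧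
    ∀ i : ℕ, i < k → TBRStep (f i) (f (i + 1))}

/-- `F` is an agreement forest for `T` and `T'`. -/
def AgreementForest {X : Type} (T T' : PhyloTree X) (F : Set (Set X)) : Prop :=
  (∀ B ∈ F, B.Nonempty) ∧ (∀ x : X, ∃ B ∈ F, x ∈ B) ∧
  (∀ B ∈ F, ∀ B' ∈ F, B ≠ B' → Disjoint B B') ∧
  (∀ B ∈ F, restrictEqOn T T' B) ∧
  (∀ B ∈ F, ∀ B' ∈ F, B ≠ B' → Disjoint (T.embVerts B) (T.embVerts B')) ∧
  (∀ B ∈ F, ∀ B' ∈ F, B ≠ B' → Disjoint (T'.embVerts B) (T'.embVerts B'))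

/-- `F` is a maximum agreement forest (minimum number of components). -/
def IsMAF {X : Type} (T T' : PhyloTree X) (F : Set (Set X)) : Prop :=
  AgreementForest T T' F ∧
  ∀ F' : Set (Set X), AgreementForest T T' F' → F.ncard ≤ F'.ncard

/-- `Y` is preserved in the forest `F`. -/
def preservedIn {X : Type} (F : Set (Set X)) (Y : Set X) : Prop :=
  ∃ B ∈ F, Y ⊆ B

/-- `l` is a common chain of `T` and `T'`. -/
def commonChain {X : Type} (T T' : PhyloTree X) (l : List X) : Prop :=
  T.isChain l ∧ T'.isChain l

/-- A CPT-eligible common chain exists: a common `n`-chain with `n ≥ 3`, or a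
common 2-chain pendant in at least one tree. -/
def CPTEligibleChain {X : Type} (T T' : PhyloTree X) : Prop :=
  (∃ l : List X, 3 ≤ l.length ∧ commonChain T T' l) ∨
  (∃ a b : X, commonChain T T' [a, b] ∧ (T.cherry a b ∨ T'.cherry a b))

/-! ### Applicability of Reductions 1–7 -/

def Red1App {X : Type} (T T' : PhyloTree X) : Prop :=
  ∃ Y : Set X, 2 ≤ Y.ncard ∧ T.pendantSet Y ∧ T'.pendantSet Y ∧ restrictEqOn T T' Y

def Red2App {X : Type} (T T' : PhyloTree X) : Prop :=
  ∃ l : List X, 4 ≤ l.length ∧ commonChain T T' l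

def Red3App {X : Type} (T T' : PhyloTree X) : Prop :=
  ∃ a b c : X, commonChain T T' [a, b, c] ∧ T.cherry a b ∧ T'.cherry b c

def Red4App {X : Type} (T T' : PhyloTree X) : Prop :=
  ∃ a b c x : X, commonChain T T' [a, b, c] ∧ T.cherry b c ∧ T'.cherry c x ∧
    x ≠ a ∧ x ≠ b ∧ x ≠ c

def Red5App {X : Type} (T T' : PhyloTree X) : Prop :=
  ∃ a b c d x : X, commonChain T T' [a, b] ∧ commonChain T T' [c, d] ∧
    T.cherry b x ∧ T.cherry c d ∧ T'.cherry a b ∧ T'.cherry d x ∧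
    x ≠ a ∧ x ≠ b ∧ x ≠ c ∧ x ≠ d

def Red6App {X : Type} (T T' : PhyloTree X) : Prop :=
  ∃ a b c d e f : X, commonChain T T' [a, b, c] ∧ commonChain T T' [d, e, f] ∧
    T.cherry b c ∧ T.cherry d e ∧ T'.isChain [a, b, c, d, e, f]

def Red7App {X : Type} (T T' : PhyloTree X) : Prop :=
  ∃ a b c d e : X, commonChain T T' [a, b, c] ∧ commonChain T T' [d, e] ∧
    T.cherry b c ∧ T.cherry d e ∧ T'.isChain [a, b, c, d, e]

/-- The pair (T,T') cannot be reduced by any of Reductions 1–7 (in either orientation). -/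
def Irred7 {X : Type} (T T' : PhyloTree X) : Prop :=
  ¬ Red1App T T' ∧ ¬ Red2App T T' ∧
  ¬ Red3App T T' ∧ ¬ Red3App T' T ∧
  ¬ Red4App T T' ∧ ¬ Red4App T' T ∧
  ¬ Red5App T T' ∧ ¬ Red5App T' T ∧
  ¬ Red6App T T' ∧ ¬ Red6App T' T ∧
  ¬ Red7App T T' ∧ ¬ Red7App T' T

/-! ### Reduction 8 -/

/-- The configuration needed for Reduction 8A: leaf-disjoint common 3-chains
`C=(b,c,d)` and `D=(e,f,g)`, `C` pendant in `T'` with cherry `{b,c}`, `C` not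
pendant in `T`, and `(a,b,c,d)` a chain of `T` but not of `T'`. -/
def Red8AData {X : Type} (T T' : PhyloTree X) (a b c d e f g : X) : Prop :=
  commonChain T T' [b, c, d] ∧ commonChain T T' [e, f, g] ∧
  Disjoint ({b, c, d} : Set X) ({e, f, g} : Set X) ∧
  T'.cherry b c ∧ ¬ T.pendantChain [b, c, d] ∧
  T.isChain [a, b, c, d] ∧ ¬ T'.isChain [a, b, c, d]

def Red8App {X : Type} (T T' : PhyloTree X) : Prop :=
  ∃ a b c d e f g : X, Red8AData T T' a b c d e f g ∨ Red8AData T' T a b c d e f g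

def Irred8 {X : Type} (T T' : PhyloTree X) : Prop :=
  Irred7 T T' ∧ ¬ Red8App T T'

/-! ### Operation P, Reductions 9 and 10 -/

def eligiblePOriented {X : Type} (T T' : PhyloTree X) (a b c d : X) : Prop :=
  T.isChain [a, b, c, d] ∧ ¬ T.pendantChain [a, b, c, d] ∧
  T'.cherry a b ∧ T'.cherry c d ∧
  ∃ F : Set (Set X), IsMAF T T' F ∧ preservedIn F {a, b} ∧ preservedIn F {c, d} ∧
    ¬ preservedIn F {a, b, c, d}

/-- `{a,b,c,d}` is eligible for Operation P (after possibly swapping T and T'). -/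
def eligibleP {X : Type} (T T' : PhyloTree X) (a b c d : X) : Prop :=
  eligiblePOriented T T' a b c d ∨ eligiblePOriented T' T a b c d

/-- Result of Operation P applied to `{a,b,c,d}` (with chain in `T`, cherries in `T'`). -/
def OpPResult {X : Type} (T T' : PhyloTree X) (a b c d : X) (S S' : PhyloTree X) : Prop :=
  eligiblePOriented T T' a b c d ∧
  S.equivT T ∧
  (∀ p q r t : X, p ≠ b → q ≠ b → r ≠ b → t ≠ b → Function.Injective ![p, q, r, t] →
    (S'.quartet p q r t ↔ T'.quartet p q r t)) ∧
  S'.cherry b c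

def Red91App {X : Type} (T T' : PhyloTree X) : Prop :=
  ∃ a b c d a' b' c' d' : X,
    commonChain T T' [b, c, d] ∧ T'.cherry b c ∧ ¬ T.pendantChain [b, c, d] ∧
    T.isChain [a, b, c, d] ∧ ¬ T'.isChain [a, b, c, d] ∧
    Disjoint ({a, b, c, d} : Set X) ({a', b', c', d'} : Set X) ∧
    eligibleP T T' a' b' c' d'

def Red92App {X : Type} (T T' : PhyloTree X) : Prop :=
  ∃ a b c d a' b' c' d' : X,
    Disjoint ({a, b, c, d} : Set X) ({a', b', c', d'} : Set X) ∧
    eligibleP T T' a b c d ∧ eligibleP T T' a' b' c' d'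

def Red9App {X : Type} (T T' : PhyloTree X) : Prop :=
  Red91App T T' ∨ Red91App T' T ∨ Red92App T T'

def Irred9 {X : Type} (T T' : PhyloTree X) : Prop :=
  Irred8 T T' ∧ ¬ Red9App T T'

def eligibleR10Oriented {X : Type} (T T' : PhyloTree X) (a b c d : X) : Prop :=
  T.cherry a b ∧ T.cherry c d ∧ T'.isChain [a, b, c] ∧ T'.cherry b c ∧
  d ≠ a ∧ d ≠ b ∧ d ≠ c ∧
  ∃ F : Set (Set X), IsMAF T T' F ∧ ({c} : Set X) ∈ F

/-- `{a,b,c,d}` is eligible for Reduction 10 (after possibly swapping T and T'). -/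
def eligibleR10 {X : Type} (T T' : PhyloTree X) (a b c d : X) : Prop :=
  eligibleR10Oriented T T' a b c d ∨ eligibleR10Oriented T' T a b c d

def Red10App {X : Type} (T T' : PhyloTree X) : Prop :=
  ∃ a b c d : X, eligibleR10 T T' a b c d

def Irred10 {X : Type} (T T' : PhyloTree X) : Prop :=
  Irred9 T T' ∧ ¬ Red10App T T'

/-! ### Restrictions and Reduction results across taxon sets -/

/-- `S` is (equal to) the restriction `T|X'` of `T` to `X' ⊆ X`. -/
def IsRestrictionOf {X : Type} (T : PhyloTree X) (X' : Set X) (S : PhyloTree ↥X') : Prop :=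
  ∀ a b c d : ↥X', Function.Injective ![a, b, c, d] →
    (S.quartet a b c d ↔ T.quartet a.1 b.1 c.1 d.1)

/-- `S` is obtained from `T` by replacing the pendant subtree on leaf set `Y`
by a single new leaf (Reduction 1 applied to `Y`). -/
def ReplacedBy {X : Type} (T : PhyloTree X) (Y : Set X)
    (S : PhyloTree (↥(Yᶜ) ⊕ Unit)) : Prop :=
  ∃ y ∈ Y, ∀ a b c d : ↥(Yᶜ) ⊕ Unit, Function.Injective ![a, b, c, d] →
    (S.quartet a b c d ↔
      T.quartet (Sum.elim Subtype.val (fun _ => y) a) (Sum.elim Subtype.val (fun _ => y) b)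
        (Sum.elim Subtype.val (fun _ => y) c) (Sum.elim Subtype.val (fun _ => y) d))

/-- `(a,b,c,d)` is an interrupted 4-chain of `T` and `T'` with interrupter `{u,v}`:
it is a chain of `T` and in `T'` there is a walk `p_a,p_b,v,p_c,p_d` with
`p_b, v, p_c` pairwise distinct; `u` is the neighbour of `v` off the walk. -/
def Interrupted4 {X : Type} (T T' : PhyloTree X) (a b c d : X) (u v : T'.V) : Prop :=
  T.isChain [a, b, c, d] ∧
  (T'.parent a = T'.parent b ∨ T'.graph.Adj (T'.parent a) (T'.parent b)) ∧
  T'.graph.Adj (T'.parent b) v ∧ T'.graph.Adj v (T'.parent c) ∧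
  (T'.parent c = T'.parent d ∨ T'.graph.Adj (T'.parent c) (T'.parent d)) ∧
  v ≠ T'.parent b ∧ v ≠ T'.parent c ∧ T'.parent b ≠ T'.parent c ∧
  T'.graph.Adj u v ∧ u ≠ T'.parent b ∧ u ≠ T'.parent c

/-- The pair `(Tr, Tr')` (on `X ⊕ Unit`, the extra label being the new taxon `g'`)
is a result of applying Reduction 8A to `T, T'` with data `a,b,c,d,e,f,g`. -/
def Red8AResult {X : Type} (T T' : PhyloTree X) (a b c d e f g : X)
    (Tr Tr' : PhyloTree (X ⊕ Unit)) : Prop :=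
  Red8AData T T' a b c d e f g ∧
  -- `Tr'` is `T'` with the chain `(e,f,g)` extended to `(e,f,g,g')`:
  (∀ p q r t : X, Function.Injective ![p, q, r, t] →
    (Tr'.quartet (Sum.inl p) (Sum.inl q) (Sum.inl r) (Sum.inl t) ↔ T'.quartet p q r t)) ∧
  Tr'.isChain [Sum.inl e, Sum.inl f, Sum.inl g, Sum.inr ()] ∧
  -- `Tr` is obtained from `T` by moving the component `A` containing `b,c,d`
  -- (cut off at the edge `{p_a,p_b}`) onto a subdivision of the edge `{p_f,p_g}`
  -- of the chain `(e,f,g,g')`: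
  ∃ A : Set X,
    A = {x : X | (T.graph.deleteEdges {s(T.parent a, T.parent b)}).Reachable
          (T.leaf x) (T.parent b)} ∧
    (∀ p ∈ A, ∀ q ∈ A, ∀ r ∈ A, ∀ t ∈ A, Function.Injective ![p, q, r, t] →
      (Tr.quartet (Sum.inl p) (Sum.inl q) (Sum.inl r) (Sum.inl t) ↔ T.quartet p q r t)) ∧
    (∀ p ∈ Aᶜ, ∀ q ∈ Aᶜ, ∀ r ∈ Aᶜ, ∀ t ∈ Aᶜ, Function.Injective ![p, q, r, t] →
      (Tr.quartet (Sum.inl p) (Sum.inl q) (Sum.inl r) (Sum.inl t) ↔ T.quartet p q r t)) ∧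
    Tr.pendantChain [Sum.inl b, Sum.inl c, Sum.inl d] ∧
    ∃ u v : Tr.V,
      Interrupted4 Tr' Tr (Sum.inl e) (Sum.inl f) (Sum.inl g) (Sum.inr ()) u v ∧
      {z : X ⊕ Unit | (Tr.graph.deleteEdges {s(u, v)}).Reachable (Tr.leaf z) u}
        = Sum.inl '' A

/-! ### Phylogenetic networks, display, generators and sides -/

structure PhyloNetwork (X : Type) : Type 1 where
  V : Type
  graph : SimpleGraph V
  finV : Finite V
  conn : graph.Connected
  leaf : X → V
  leaf_inj : Function.Injective leaf
  deg_leaf : ∀ x : X, (graph.neighborSet (leaf x)).ncard = 1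
  deg_internal : ∀ v : V, v ∉ Set.range leaf → (graph.neighborSet v).ncard = 3

namespace PhyloNetwork

variable {X : Type}

/-- The reticulation number `r(N) = |E| - (|V| - 1)`. -/
noncomputable def retic (N : PhyloNetwork X) : ℕ :=
  N.graph.edgeSet.ncard - (Nat.card N.V - 1)

noncomputable def parent (N : PhyloNetwork X) (x : X) : N.V :=
  (Set.ncard_eq_one.mp (N.deg_leaf x)).choose

end PhyloNetwork

/-- An image of the tree `T` in the network `N`: a subdivision of `T` inside `N`. -/
structure TreeImage {X : Type} (T : PhyloTree X) (N : PhyloNetwork X) : Type where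
  emb : T.V → N.V
  inj : Function.Injective emb
  leaf_map : ∀ x : X, emb (T.leaf x) = N.leaf x
  walk : ∀ ⦃u v : T.V⦄, T.graph.Adj u v → N.graph.Walk (emb u) (emb v)
  walk_isPath : ∀ ⦃u v : T.V⦄ (h : T.graph.Adj u v), (walk h).IsPath
  walk_symm : ∀ ⦃u v : T.V⦄ (h : T.graph.Adj u v), walk h.symm = (walk h).reverse
  internally_disjoint : ∀ ⦃u v : T.V⦄ (h : T.graph.Adj u v) ⦃u' v' : T.V⦄
    (h' : T.graph.Adj u' v'), s(u, v) ≠ s(u', v') → ∀ z : N.V,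
      z ∈ (walk h).support → z ∈ (walk h').support → z = emb u' ∨ z = emb v'

/-- `N` displays `T`. -/
def Displays {X : Type} (N : PhyloNetwork X) (T : PhyloTree X) : Prop :=
  Nonempty (TreeImage T N)

def TreeImage.edges {X : Type} {T : PhyloTree X} {N : PhyloNetwork X}
    (I : TreeImage T N) : Set (Sym2 N.V) :=
  {e | ∃ (u v : T.V) (h : T.graph.Adj u v), e ∈ (I.walk h).edges}

/-- A spanning tree of `N` (given by its edge set `R`) obtained by greedily
extending an image of `T`. -/
structure SpanExt {X : Type} (T : PhyloTree X) (N : PhyloNetwork X) : Type where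
  img : TreeImage T N
  R : Set (Sym2 N.V)
  sub : R ⊆ N.graph.edgeSet
  extends_img : img.edges ⊆ R
  isTree : (SimpleGraph.fromEdgeSet R).IsTree

/-- A vertex of `N` which is a vertex of the underlying generator: an internal
vertex not adjacent to any leaf. -/
def genVertex {X : Type} (N : PhyloNetwork X) (v : N.V) : Prop :=
  v ∉ Set.range N.leaf ∧ ∀ x : X, ¬ N.graph.Adj v (N.leaf x)

/-- A side of the generator underlying `N`, encoded by its associated path
`P_S` in `N`: a walk between generator vertices all of whose internal vertices
are parents of leaves. -/
structure NSide {X : Type} (N : PhyloNetwork X) : Type where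
  u : N.V
  w : N.V
  walk : N.graph.Walk u w
  len_pos : 0 < walk.length
  gu : genVertex N u
  gw : genVertex N w
  internal : ∀ v ∈ walk.support, v ≠ u → v ≠ w → ¬ genVertex N v ∧ v ∉ Set.range N.leaf
  nodup : walk.support.tail.Nodup
  no_return : u = w ∨ u ∉ walk.support.tail

namespace NSide

variable {X : Type} {N : PhyloNetwork X}

/-- The taxa attached to (decorating) the side. -/
def taxa (S : NSide N) : Set X :=
  {x : X | ∃ v ∈ S.walk.support, N.graph.Adj v (N.leaf x)}

def edgeSet (S : NSide N) : Set (Sym2 N.V) := {e | e ∈ S.walk.edges}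

def incident (S : NSide N) (v : N.V) : Prop := S.u = v ∨ S.w = v

def isLoop (S : NSide N) : Prop := S.u = S.w

def sameEnds (S S' : NSide N) : Prop := ({S.u, S.w} : Set N.V) = {S'.u, S'.w}

/-- The side is a simple edge of the generator: not a loop, and no other
(parallel) side has the same endpoints. -/
def isSimple (S : NSide N) : Prop :=
  S.u ≠ S.w ∧ ∀ S' : NSide N, S.sameEnds S' → S'.edgeSet = S.edgeSet

end NSide

/-- The spanning tree with edge set `R` omits some edge of the side (has a
breakpoint on the side). -/
def omitsOn {X : Type} {N : PhyloNetwork X} (R : Set (Sym2 N.V)) (S : NSide N) : Prop :=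
  ∃ e ∈ S.walk.edges, e ∉ R

def coversSide {X : Type} {N : PhyloNetwork X} (R : Set (Sym2 N.V)) (S : NSide N) : Prop :=
  ∀ e ∈ S.walk.edges, e ∈ R

def omitsOnly {X : Type} {N : PhyloNetwork X} (R : Set (Sym2 N.V)) (S : NSide N)
    (e₀ : Sym2 N.V) : Prop :=
  e₀ ∉ R ∧ ∀ e ∈ S.walk.edges, e ≠ e₀ → e ∈ R

/-- `S` is a `1|3` side `a|bcd` relative to the spanning trees `R, R'`. -/
def Side13 {X : Type} {N : PhyloNetwork X} (R R' : Set (Sym2 N.V)) (S : NSide N)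
    (a b c d : X) : Prop :=
  S.walk.support = [S.u, N.parent a, N.parent b, N.parent c, N.parent d, S.w] ∧
  ((omitsOnly R S s(N.parent a, N.parent b) ∧ coversSide R' S) ∨
   (omitsOnly R' S s(N.parent a, N.parent b) ∧ coversSide R S))

/-- `S` is a `2|2` side `ab|cd` relative to the spanning trees `R, R'`. -/
def Side22 {X : Type} {N : PhyloNetwork X} (R R' : Set (Sym2 N.V)) (S : NSide N)
    (a b c d : X) : Prop :=
  S.walk.support = [S.u, N.parent a, N.parent b, N.parent c, N.parent d, S.w] ∧
  ((omitsOnly R S s(N.parent b, N.parent c) ∧ coversSide R' S) ∨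
   (omitsOnly R' S s(N.parent b, N.parent c) ∧ coversSide R S))

/-- `S` is a `2|1|1` side `ab|c|d` relative to the spanning trees `R, R'`. -/
def Side211 {X : Type} {N : PhyloNetwork X} (R R' : Set (Sym2 N.V)) (S : NSide N)
    (a b c d : X) : Prop :=
  S.walk.support = [S.u, N.parent a, N.parent b, N.parent c, N.parent d, S.w] ∧
  ((omitsOnly R S s(N.parent b, N.parent c) ∧ omitsOnly R' S s(N.parent c, N.parent d)) ∨
   (omitsOnly R' S s(N.parent b, N.parent c) ∧ omitsOnly R S s(N.parent c, N.parent d)))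

/-- `S` is a `1|1|1` side relative to the spanning trees `R, R'`. -/
def Side111 {X : Type} {N : PhyloNetwork X} (R R' : Set (Sym2 N.V)) (S : NSide N) : Prop :=
  ∃ a b c : X,
    S.walk.support = [S.u, N.parent a, N.parent b, N.parent c, S.w] ∧
    ((omitsOnly R S s(N.parent a, N.parent b) ∧ omitsOnly R' S s(N.parent b, N.parent c)) ∨
     (omitsOnly R' S s(N.parent a, N.parent b) ∧ omitsOnly R S s(N.parent b, N.parent c)))

open SimpleGraph

variable {X : Type}

namespace PhyloNetwork

lemma neighborSet_leaf (N : PhyloNetwork X) (x : X) :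
    N.graph.neighborSet (N.leaf x) = {N.parent x} :=
  (Set.ncard_eq_one.mp (N.deg_leaf x)).choose_spec

lemma adj_leaf_parent (N : PhyloNetwork X) (x : X) :
    N.graph.Adj (N.leaf x) (N.parent x) := by
  have := N.neighborSet_leaf x
  have : N.parent x ∈ N.graph.neighborSet (N.leaf x) := by rw [this]; rfl
  exact this

lemma parent_ne_leaf_self (N : PhyloNetwork X) (x : X) : N.parent x ≠ N.leaf x :=
  fun h => N.graph.irrefl (h ▸ N.adj_leaf_parent x)

/-- any vertex adjacent to a leaf is the parent -/
lemma eq_parent_of_adj_leaf (N : PhyloNetwork X) {x : X} {v : N.V}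
    (h : N.graph.Adj (N.leaf x) v) : v = N.parent x := by
  have : v ∈ N.graph.neighborSet (N.leaf x) := h
  rwa [N.neighborSet_leaf, Set.mem_singleton_iff] at this

/-- Any positive-length walk from a leaf has the parent as second vertex. -/
lemma walk_from_leaf {N : PhyloNetwork X} {x : X} {w : N.V}
    (p : N.graph.Walk (N.leaf x) w) (hp : 0 < p.length) :
    ∃ (q : N.graph.Walk (N.parent x) w) (h : N.graph.Adj (N.leaf x) (N.parent x)),
      p = q.cons h := by
  cases p with
  | nil => simp at hp
  | cons h q =>
    rename_i v
    have hv : v = N.parent x := N.eq_parent_of_adj_leaf h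
    subst hv
    exact ⟨q, h, rfl⟩

end PhyloNetwork

namespace PhyloTree

lemma neighborSet_leaf (T : PhyloTree X) (x : X) :
    T.graph.neighborSet (T.leaf x) = {T.parent x} :=
  (Set.ncard_eq_one.mp (T.deg_leaf x)).choose_spec

lemma adj_leaf_parent (T : PhyloTree X) (x : X) :
    T.graph.Adj (T.leaf x) (T.parent x) := by
  have h := T.neighborSet_leaf x
  have : T.parent x ∈ T.graph.neighborSet (T.leaf x) := by rw [h]; rfl
  exact this

lemma parent_ne_leaf_self (T : PhyloTree X) (x : X) : T.parent x ≠ T.leaf x :=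
  fun h => T.graph.irrefl (h ▸ T.adj_leaf_parent x)

lemma eq_parent_of_adj_leaf (T : PhyloTree X) {x : X} {v : T.V}
    (h : T.graph.Adj (T.leaf x) v) : v = T.parent x := by
  have : v ∈ T.graph.neighborSet (T.leaf x) := h
  rwa [T.neighborSet_leaf, Set.mem_singleton_iff] at this

/-- Any positive-length walk from a leaf has the parent as second vertex. -/
lemma walk_from_leaf {T : PhyloTree X} {x : X} {w : T.V}
    (p : T.graph.Walk (T.leaf x) w) (hp : 0 < p.length) :
    ∃ (q : T.graph.Walk (T.parent x) w) (h : T.graph.Adj (T.leaf x) (T.parent x)),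
      p = q.cons h := by
  cases p with
  | nil => simp at hp
  | cons h q =>
    rename_i v
    have hv : v = T.parent x := T.eq_parent_of_adj_leaf h
    subst hv
    exact ⟨q, h, rfl⟩

/-- If `|X| ≥ 3` (three distinct taxa), a parent is never another leaf. -/
lemma parent_ne_leaf (T : PhyloTree X) {x y z : X} (hxy : x ≠ y) (hxz : x ≠ z)
    (hyz : y ≠ z) : T.parent x ≠ T.leaf y := by
  intro h
  have hpy : T.parent y = T.leaf x := by
    have : T.graph.Adj (T.leaf y) (T.leaf x) := by
      have := T.adj_leaf_parent x
      rw [h] at this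
      exact this.symm
    exact (T.eq_parent_of_adj_leaf this).symm
  obtain ⟨p0⟩ := T.isTree.isConnected.preconnected (T.leaf x) (T.leaf z)
  classical
  have hzx : T.leaf x ≠ T.leaf z := fun h => hxz (T.leaf_inj h)
  have hyzl : T.leaf y ≠ T.leaf z := fun h => hyz (T.leaf_inj h)
  obtain ⟨q, hq, hqpath⟩ : ∃ q : T.graph.Walk (T.leaf x) (T.leaf z), q.IsPath ∧ True :=
    ⟨p0.toPath.1, p0.toPath.2, trivial⟩
  have hlen : 0 < q.length := by
    rcases Nat.eq_zero_or_pos q.length with h0 | h0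
    · exact absurd (SimpleGraph.Walk.eq_of_length_eq_zero h0) hzx
    · exact h0
  obtain ⟨q', ha, rfl⟩ := walk_from_leaf q hlen
  have hq'path : q'.IsPath := hq.of_cons
  have hxns : T.leaf x ∉ q'.support := by
    have := hq.2
    simp only [SimpleGraph.Walk.support_cons, List.nodup_cons] at this
    exact this.1
  have hlen' : 0 < q'.length := by
    rcases Nat.eq_zero_or_pos q'.length with h0 | h0
    · exact absurd (SimpleGraph.Walk.eq_of_length_eq_zero h0)
        (by rw [h]; exact hyzl)
    · exact h0
  set q2 : T.graph.Walk (T.leaf y) (T.leaf z) := q'.copy h rfl with hq2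
  have hlen2 : 0 < q2.length := by rwa [SimpleGraph.Walk.length_copy]
  obtain ⟨q'', hb, hq2eq⟩ := walk_from_leaf q2 hlen2
  apply hxns
  have hsupp : q'.support = q2.support := (SimpleGraph.Walk.support_copy q' h rfl).symm
  rw [hsupp, hq2eq]
  rw [SimpleGraph.Walk.support_cons]
  right
  rw [← hpy]
  exact q''.start_mem_support

end PhyloTree

/-- injectivity of a 4-tuple gives pairwise distinctness -/
lemma inj4_iff {α : Type*} {a b c d : α} :
    Function.Injective ![a, b, c, d] ↔
      a ≠ b ∧ a ≠ c ∧ a ≠ d ∧ b ≠ c ∧ b ≠ d ∧ c ≠ d := by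
  constructor
  · intro h
    refine ⟨?_, ?_, ?_, ?_, ?_, ?_⟩ <;>
      (intro he; first
        | exact absurd (h (a₁ := 0) (a₂ := 1) (by simpa using he)) (by decide)
        | exact absurd (h (a₁ := 0) (a₂ := 2) (by simpa using he)) (by decide)
        | exact absurd (h (a₁ := 0) (a₂ := 3) (by simpa using he)) (by decide)
        | exact absurd (h (a₁ := 1) (a₂ := 2) (by simpa using he)) (by decide)
        | exact absurd (h (a₁ := 1) (a₂ := 3) (by simpa using he)) (by decide)
        | exact absurd (h (a₁ := 2) (a₂ := 3) (by simpa using he)) (by decide))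
  · rintro ⟨h1, h2, h3, h4, h5, h6⟩ i j hij
    fin_cases i <;> fin_cases j <;> simp_all <;> tauto

/-- Walk edges from support: edges are the consecutive pairs of the support. -/
lemma walk_edges_eq_zip {V : Type*} {G : SimpleGraph V} {u v : V} (p : G.Walk u v) :
    p.edges = (p.support.zip p.support.tail).map fun z => s(z.1, z.2) := by
  induction p with
  | nil => simp
  | cons h q ih =>
    rw [SimpleGraph.Walk.edges_cons, SimpleGraph.Walk.support_cons, ih]
    rw [q.support_eq_cons]
    simp only [List.tail_cons, List.zip_cons_cons, List.map_cons]


open SimpleGraph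

variable {X : Type}

namespace PhyloNetwork

lemma nbhd_three (N : PhyloNetwork X) {v p n : N.V} {x : X}
    (hpx : v = N.parent x) (hv : v ∉ Set.range N.leaf)
    (h1 : N.graph.Adj p v) (h2 : N.graph.Adj v n) (hpn : p ≠ n)
    (hpl : p ∉ Set.range N.leaf) (hnl : n ∉ Set.range N.leaf) :
    N.graph.neighborSet v = {N.leaf x, p, n} := by
  have hsub : ({N.leaf x, p, n} : Set N.V) ⊆ N.graph.neighborSet v := by
    intro z hz
    rcases hz with hz | hz | hz
    · subst hz; subst hpx; exact (N.adj_leaf_parent x).symm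
    · subst hz; exact h1.symm
    · subst hz; exact h2
  have hlp : N.leaf x ≠ p := fun h => hpl ⟨x, h⟩
  have hln : N.leaf x ≠ n := fun h => hnl ⟨x, h⟩
  have hcard : ({N.leaf x, p, n} : Set N.V).ncard = 3 := by
    rw [Set.ncard_insert_of_notMem (by simp [hlp, hln]) (by
      have : Finite N.V := N.finV; exact Set.toFinite _),
      Set.ncard_insert_of_notMem (by simp [hpn]) (by
      have : Finite N.V := N.finV; exact Set.toFinite _),
      Set.ncard_singleton]
  have : Finite N.V := N.finV
  exact (Set.eq_of_subset_of_ncard_le hsub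
    (by rw [hcard, N.deg_internal v hv]) (Set.toFinite _)).symm

lemma taxon_eq_of_parent_eq (N : PhyloNetwork X) {v p n : N.V} {x y : X}
    (hform : N.graph.neighborSet v = {N.leaf x, p, n})
    (hpl : p ∉ Set.range N.leaf) (hnl : n ∉ Set.range N.leaf)
    (h : N.parent y = v) : y = x := by
  have : N.leaf y ∈ N.graph.neighborSet v := by
    rw [← h]; exact (N.adj_leaf_parent y).symm
  rw [hform] at this
  rcases this with h1 | h1 | h1
  · exact N.leaf_inj h1
  · exact absurd ⟨y, h1⟩ hpl
  · exact absurd ⟨y, h1⟩ hnl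

end PhyloNetwork

/-- All structural facts about a decorated side with four taxa. -/
structure SideFacts {X : Type} {N : PhyloNetwork X} (S : NSide N) (a b c d : X) : Prop where
  hsupp : S.walk.support = [S.u, N.parent a, N.parent b, N.parent c, N.parent d, S.w]
  hedges : S.walk.edges = [s(S.u, N.parent a), s(N.parent a, N.parent b),
    s(N.parent b, N.parent c), s(N.parent c, N.parent d), s(N.parent d, S.w)]
  nbA : N.graph.neighborSet (N.parent a) = {N.leaf a, S.u, N.parent b}
  nbB : N.graph.neighborSet (N.parent b) = {N.leaf b, N.parent a, N.parent c}
  nbC : N.graph.neighborSet (N.parent c) = {N.leaf c, N.parent b, N.parent d}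
  nbD : N.graph.neighborSet (N.parent d) = {N.leaf d, N.parent c, S.w}
  genU : genVertex N S.u
  genW : genVertex N S.w
  ngA : ¬ genVertex N (N.parent a)
  ngB : ¬ genVertex N (N.parent b)
  ngC : ¬ genVertex N (N.parent c)
  ngD : ¬ genVertex N (N.parent d)
  nlA : N.parent a ∉ Set.range N.leaf
  nlB : N.parent b ∉ Set.range N.leaf
  nlC : N.parent c ∉ Set.range N.leaf
  nlD : N.parent d ∉ Set.range N.leaf
  dAB : N.parent a ≠ N.parent b
  dAC : N.parent a ≠ N.parent c
  dAD : N.parent a ≠ N.parent d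
  dBC : N.parent b ≠ N.parent c
  dBD : N.parent b ≠ N.parent d
  dCD : N.parent c ≠ N.parent d
  dAW : N.parent a ≠ S.w
  dBW : N.parent b ≠ S.w
  dCW : N.parent c ≠ S.w
  dDW : N.parent d ≠ S.w
  dUA : S.u ≠ N.parent a
  dUB : S.u ≠ N.parent b
  dUC : S.u ≠ N.parent c
  dUD : S.u ≠ N.parent d

namespace SideFacts

variable {N : PhyloNetwork X} {S : NSide N} {a b c d : X}

lemma taxaAB (h : SideFacts S a b c d) : a ≠ b := fun he => h.dAB (by rw [he])
lemma taxaAC (h : SideFacts S a b c d) : a ≠ c := fun he => h.dAC (by rw [he])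
lemma taxaAD (h : SideFacts S a b c d) : a ≠ d := fun he => h.dAD (by rw [he])
lemma taxaBC (h : SideFacts S a b c d) : b ≠ c := fun he => h.dBC (by rw [he])
lemma taxaBD (h : SideFacts S a b c d) : b ≠ d := fun he => h.dBD (by rw [he])
lemma taxaCD (h : SideFacts S a b c d) : c ≠ d := fun he => h.dCD (by rw [he])

end SideFacts

/-- Build the side facts from the support equation. -/
lemma sideFacts_of_support {N : PhyloNetwork X} (S : NSide N) (a b c d : X)
    (hsupp : S.walk.support = [S.u, N.parent a, N.parent b, N.parent c, N.parent d, S.w]) :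
    SideFacts S a b c d := by
  classical
  set pa := N.parent a
  set pb := N.parent b
  set pc := N.parent c
  set pd := N.parent d
  -- distinctness of tail members
  have htail : S.walk.support.tail = [pa, pb, pc, pd, S.w] := by rw [hsupp]; rfl
  have hnd := S.nodup
  rw [htail] at hnd
  simp only [List.nodup_cons, List.mem_cons, List.mem_singleton, List.not_mem_nil,
    List.nodup_nil, List.mem_nil_iff, or_false, and_true] at hnd
  obtain ⟨hna, hnb, hnc, hnd'⟩ := hnd
  push_neg at hna hnb hnc
  have dAB : pa ≠ pb := hna.1
  have dAC : pa ≠ pc := hna.2.1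
  have dAD : pa ≠ pd := hna.2.2.1
  have dAW : pa ≠ S.w := hna.2.2.2
  have dBC : pb ≠ pc := hnb.1
  have dBD : pb ≠ pd := hnb.2.1
  have dBW : pb ≠ S.w := hnb.2.2
  have dCD : pc ≠ pd := hnc.1
  have dCW : pc ≠ S.w := hnc.2
  have dDW : pd ≠ S.w := by simpa using hnd'
  -- u distinct from internals
  have dUA : S.u ≠ pa := by
    rcases S.no_return with h | h
    · rw [h]; exact fun he => dAW he.symm
    · rw [htail] at h; intro he; exact h (by rw [he]; simp)
  have dUB : S.u ≠ pb := by
    rcases S.no_return with h | h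
    · rw [h]; exact fun he => dBW he.symm
    · rw [htail] at h; intro he; exact h (by rw [he]; simp)
  have dUC : S.u ≠ pc := by
    rcases S.no_return with h | h
    · rw [h]; exact fun he => dCW he.symm
    · rw [htail] at h; intro he; exact h (by rw [he]; simp)
  have dUD : S.u ≠ pd := by
    rcases S.no_return with h | h
    · rw [h]; exact fun he => dDW he.symm
    · rw [htail] at h; intro he; exact h (by rw [he]; simp)
  -- adjacency of consecutive support entries
  have hchain : List.IsChain N.graph.Adj S.walk.support := S.walk.isChain_adj_support
  rw [hsupp] at hchain
  simp only [List.isChain_cons_cons, List.isChain_singleton, and_true] at hchain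
  obtain ⟨aUA, aAB, aBC, aCD, aDW⟩ := hchain
  -- membership of internals
  have mA : pa ∈ S.walk.support := by rw [hsupp]; simp
  have mB : pb ∈ S.walk.support := by rw [hsupp]; simp
  have mC : pc ∈ S.walk.support := by rw [hsupp]; simp
  have mD : pd ∈ S.walk.support := by rw [hsupp]; simp
  have iA := S.internal pa mA dUA.symm dAW
  have iB := S.internal pb mB dUB.symm dBW
  have iC := S.internal pc mC dUC.symm dCW
  have iD := S.internal pd mD dUD.symm dDW
  have nlU : S.u ∉ Set.range N.leaf := S.gu.1
  have nlW : S.w ∉ Set.range N.leaf := S.gw.1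
  -- neighbor sets
  have nbA := N.nbhd_three (x := a) rfl iA.2 aUA aAB (fun he => dUB (he ▸ rfl)) nlU iB.2
  have nbB := N.nbhd_three (x := b) rfl iB.2 aAB aBC dAC iA.2 iC.2
  have nbC := N.nbhd_three (x := c) rfl iC.2 aBC aCD dBD iB.2 iD.2
  have nbD := N.nbhd_three (x := d) rfl iD.2 aCD aDW (fun he => dCW he) iC.2 nlW
  -- edges
  have hedges : S.walk.edges = [s(S.u, pa), s(pa, pb), s(pb, pc), s(pc, pd), s(pd, S.w)] := by
    rw [walk_edges_eq_zip, hsupp]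
    rfl
  exact ⟨hsupp, hedges, nbA, nbB, nbC, nbD, S.gu, S.gw, iA.1, iB.1, iC.1, iD.1,
    iA.2, iB.2, iC.2, iD.2, dAB, dAC, dAD, dBC, dBD, dCD, dAW, dBW, dCW, dDW,
    dUA, dUB, dUC, dUD⟩


open SimpleGraph

variable {X : Type}

lemma gen_ne {N : PhyloNetwork X} {v w : N.V} (hg : genVertex N v)
    (hng : ¬ genVertex N w) : v ≠ w := fun h => hng (h ▸ hg)

lemma pair_eq {α : Type*} {l p n p' n' : α}
    (h : ({l, p, n} : Set α) = {l, p', n'})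
    (hlp : l ≠ p) (hln : l ≠ n) (hlp' : l ≠ p') (hln' : l ≠ n')
    (hpn : p ≠ n) (hpn' : p' ≠ n') :
    (p = p' ∧ n = n') ∨ (p = n' ∧ n = p') := by
  have hp : p = p' ∨ p = n' := by
    have : p ∈ ({l, p', n'} : Set α) := h ▸ (by simp : p ∈ ({l, p, n} : Set α))
    rcases this with h1 | h1 | h1
    · exact absurd h1.symm hlp
    · exact Or.inl h1
    · exact Or.inr h1
  have hn : n = p' ∨ n = n' := by
    have : n ∈ ({l, p', n'} : Set α) := h ▸ (by simp : n ∈ ({l, p, n} : Set α))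
    rcases this with h1 | h1 | h1
    · exact absurd h1.symm hln
    · exact Or.inl h1
    · exact Or.inr h1
  rcases hp with hp | hp
  · rcases hn with hn | hn
    · exact absurd (hp.trans hn.symm) hpn
    · exact Or.inl ⟨hp, hn⟩
  · rcases hn with hn | hn
    · exact Or.inr ⟨hp, hn⟩
    · exact absurd (hn.trans hp.symm) hpn.symm  -- n = n' = p → p = n

lemma ne_leaf {N : PhyloNetwork X} {v : N.V} (h : v ∉ Set.range N.leaf) (x : X) :
    N.leaf x ≠ v := fun he => h ⟨x, he⟩

lemma vertex_cmp (N : PhyloNetwork X) {v L R L' R' : N.V} {t t' : X}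
    (hnb : N.graph.neighborSet v = {N.leaf t, L, R})
    (hnb' : N.graph.neighborSet (N.parent t') = {N.leaf t', L', R'})
    (he : N.parent t' = v)
    (hLnl : L ∉ Set.range N.leaf) (hRnl : R ∉ Set.range N.leaf)
    (hLnl' : L' ∉ Set.range N.leaf) (hRnl' : R' ∉ Set.range N.leaf)
    (hLR : L ≠ R) (hLR' : L' ≠ R') :
    t' = t ∧ ((L' = L ∧ R' = R) ∨ (L' = R ∧ R' = L)) := by
  have ht : t' = t := N.taxon_eq_of_parent_eq hnb hLnl hRnl he
  have hset : ({N.leaf t, L', R'} : Set N.V) = {N.leaf t, L, R} := by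
    rw [← hnb, ← he, hnb', ht]
  exact ⟨ht, pair_eq hset (ne_leaf hLnl' t) (ne_leaf hRnl' t)
    (ne_leaf hLnl t) (ne_leaf hRnl t) hLR' hLR⟩

section Cases

variable {N : PhyloNetwork X} {S S' : NSide N} {a b c d a' b' c' d' : X}

/-- side 2 equals side 1 with the same direction -/
def SidesAligned (S S' : NSide N) (a b c d a' b' c' d' : X) : Prop :=
  a' = a ∧ b' = b ∧ c' = c ∧ d' = d ∧ S'.u = S.u ∧ S'.w = S.w

/-- side 2 equals side 1 reversed -/
def SidesRev (S S' : NSide N) (a b c d a' b' c' d' : X) : Prop :=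
  a' = d ∧ b' = c ∧ c' = b ∧ d' = a ∧ S'.u = S.w ∧ S'.w = S.u


lemma caseX12 (h : SideFacts S a b c d) (h' : SideFacts S' a' b' c' d') (he : N.parent a' = N.parent b) : False := by
  obtain ⟨ht, hp⟩ := vertex_cmp N h.nbB h'.nbA he h.nlA h.nlC h'.genU.1 h'.nlB h.dAC h'.dUB
  rcases hp with ⟨h1, _⟩ | ⟨h1, _⟩
  · exact gen_ne h'.genU h.ngA h1
  · exact gen_ne h'.genU h.ngC h1

lemma caseX13 (h : SideFacts S a b c d) (h' : SideFacts S' a' b' c' d') (he : N.parent a' = N.parent c) : False := by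
  obtain ⟨ht, hp⟩ := vertex_cmp N h.nbC h'.nbA he h.nlB h.nlD h'.genU.1 h'.nlB h.dBD h'.dUB
  rcases hp with ⟨h1, _⟩ | ⟨h1, _⟩
  · exact gen_ne h'.genU h.ngB h1
  · exact gen_ne h'.genU h.ngD h1

lemma caseX21 (h : SideFacts S a b c d) (h' : SideFacts S' a' b' c' d') (he : N.parent b' = N.parent a) : False := by
  obtain ⟨ht, hp⟩ := vertex_cmp N h.nbA h'.nbB he h.genU.1 h.nlB h'.nlA h'.nlC
    h.dUB h'.dAC
  rcases hp with ⟨h1, _⟩ | ⟨_, h1⟩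
  · exact gen_ne h.genU h'.ngA h1.symm
  · exact gen_ne h.genU h'.ngC h1.symm

lemma caseX24 (h : SideFacts S a b c d) (h' : SideFacts S' a' b' c' d') (he : N.parent b' = N.parent d) : False := by
  obtain ⟨ht, hp⟩ := vertex_cmp N h.nbD h'.nbB he h.nlC h.genW.1 h'.nlA h'.nlC
    h.dCW h'.dAC
  rcases hp with ⟨_, h1⟩ | ⟨h1, _⟩
  · exact gen_ne h.genW h'.ngC h1.symm
  · exact gen_ne h.genW h'.ngA h1.symm

lemma caseX31 (h : SideFacts S a b c d) (h' : SideFacts S' a' b' c' d') (he : N.parent c' = N.parent a) : False := by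
  obtain ⟨ht, hp⟩ := vertex_cmp N h.nbA h'.nbC he h.genU.1 h.nlB h'.nlB h'.nlD
    h.dUB h'.dBD
  rcases hp with ⟨h1, _⟩ | ⟨_, h1⟩
  · exact gen_ne h.genU h'.ngB h1.symm
  · exact gen_ne h.genU h'.ngD h1.symm

lemma caseX34 (h : SideFacts S a b c d) (h' : SideFacts S' a' b' c' d') (he : N.parent c' = N.parent d) : False := by
  obtain ⟨ht, hp⟩ := vertex_cmp N h.nbD h'.nbC he h.nlC h.genW.1 h'.nlB h'.nlD
    h.dCW h'.dBD
  rcases hp with ⟨_, h1⟩ | ⟨h1, _⟩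
  · exact gen_ne h.genW h'.ngD h1.symm
  · exact gen_ne h.genW h'.ngB h1.symm

lemma caseX42 (h : SideFacts S a b c d) (h' : SideFacts S' a' b' c' d') (he : N.parent d' = N.parent b) : False := by
  obtain ⟨ht, hp⟩ := vertex_cmp N h.nbB h'.nbD he h.nlA h.nlC h'.nlC h'.genW.1
    h.dAC h'.dCW
  rcases hp with ⟨_, h1⟩ | ⟨_, h1⟩
  · exact gen_ne h'.genW h.ngC h1
  · exact gen_ne h'.genW h.ngA h1

lemma caseX43 (h : SideFacts S a b c d) (h' : SideFacts S' a' b' c' d') (he : N.parent d' = N.parent c) : False := by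
  obtain ⟨ht, hp⟩ := vertex_cmp N h.nbC h'.nbD he h.nlB h.nlD h'.nlC h'.genW.1
    h.dBD h'.dCW
  rcases hp with ⟨_, h1⟩ | ⟨_, h1⟩
  · exact gen_ne h'.genW h.ngD h1
  · exact gen_ne h'.genW h.ngB h1

lemma baseA (h : SideFacts S a b c d) (h' : SideFacts S' a' b' c' d') (hb : N.parent b' = N.parent b) (hc : N.parent c' = N.parent c) :
    SidesAligned S S' a b c d a' b' c' d' := by
  obtain ⟨tb, hpB⟩ := vertex_cmp N h.nbB h'.nbB hb h.nlA h.nlC h'.nlA h'.nlC h.dAC h'.dAC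
  obtain ⟨tc, hpC⟩ := vertex_cmp N h.nbC h'.nbC hc h.nlB h.nlD h'.nlB h'.nlD h.dBD h'.dBD
  have ha : N.parent a' = N.parent a := by
    rcases hpB with ⟨h1, _⟩ | ⟨h1, h2⟩
    · exact h1
    · exact absurd (hc ▸ h2 : N.parent c = N.parent a).symm h.dAC
  have hd : N.parent d' = N.parent d := by
    rcases hpC with ⟨_, h1⟩ | ⟨h1, _⟩
    · exact h1
    · exact absurd (hb ▸ h1 : N.parent b = N.parent d) h.dBD
  obtain ⟨ta, hpA⟩ := vertex_cmp N h.nbA h'.nbA ha h.genU.1 h.nlB h'.genU.1 h'.nlB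
    h.dUB h'.dUB
  obtain ⟨td, hpD⟩ := vertex_cmp N h.nbD h'.nbD hd h.nlC h.genW.1 h'.nlC h'.genW.1
    h.dCW h'.dCW
  have hu : S'.u = S.u := by
    rcases hpA with ⟨h1, _⟩ | ⟨h1, _⟩
    · exact h1
    · exact absurd h1 (gen_ne h'.genU h.ngB)
  have hw : S'.w = S.w := by
    rcases hpD with ⟨_, h1⟩ | ⟨_, h1⟩
    · exact h1
    · exact absurd h1 (gen_ne h'.genW h.ngC)
  exact ⟨ta, tb, tc, td, hu, hw⟩

lemma baseR (h : SideFacts S a b c d) (h' : SideFacts S' a' b' c' d') (hb : N.parent b' = N.parent c) (hc : N.parent c' = N.parent b) :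
    SidesRev S S' a b c d a' b' c' d' := by
  obtain ⟨tb, hpB⟩ := vertex_cmp N h.nbC h'.nbB hb h.nlB h.nlD h'.nlA h'.nlC h.dBD h'.dAC
  obtain ⟨tc, hpC⟩ := vertex_cmp N h.nbB h'.nbC hc h.nlA h.nlC h'.nlB h'.nlD h.dAC h'.dBD
  have ha : N.parent a' = N.parent d := by
    rcases hpB with ⟨_, h1⟩ | ⟨h1, _⟩
    · exact absurd (hc.symm.trans h1) h.dBD
    · exact h1
  have hd : N.parent d' = N.parent a := by
    rcases hpC with ⟨h1, _⟩ | ⟨_, h1⟩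
    · exact absurd (h1.symm.trans hb) h.dAC
    · exact h1
  obtain ⟨ta, hpA⟩ := vertex_cmp N h.nbD h'.nbA ha h.nlC h.genW.1 h'.genU.1 h'.nlB
    h.dCW h'.dUB
  obtain ⟨td, hpD⟩ := vertex_cmp N h.nbA h'.nbD hd h.genU.1 h.nlB h'.nlC h'.genW.1
    h.dUB h'.dCW
  have hu : S'.u = S.w := by
    rcases hpA with ⟨h1, _⟩ | ⟨h1, _⟩
    · exact absurd h1 (gen_ne h'.genU h.ngC)
    · exact h1
  have hw : S'.w = S.u := by
    rcases hpD with ⟨h1, _⟩ | ⟨_, h1⟩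
    · exact absurd h1.symm (gen_ne h.genU h'.ngC)
    · exact h1
  exact ⟨ta, tb, tc, td, hu, hw⟩

lemma caseA22 (h : SideFacts S a b c d) (h' : SideFacts S' a' b' c' d')
    (hb : N.parent b' = N.parent b) : SidesAligned S S' a b c d a' b' c' d' := by
  obtain ⟨tb, hp⟩ := vertex_cmp N h.nbB h'.nbB hb h.nlA h.nlC h'.nlA h'.nlC h.dAC h'.dAC
  rcases hp with ⟨_, h1⟩ | ⟨h1, _⟩
  · exact baseA h h' hb h1
  · exact (caseX13 h h' h1).elim

lemma caseR23 (h : SideFacts S a b c d) (h' : SideFacts S' a' b' c' d')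
    (hb : N.parent b' = N.parent c) : SidesRev S S' a b c d a' b' c' d' := by
  obtain ⟨tb, hp⟩ := vertex_cmp N h.nbC h'.nbB hb h.nlB h.nlD h'.nlA h'.nlC h.dBD h'.dAC
  rcases hp with ⟨h1, _⟩ | ⟨_, h1⟩
  · exact (caseX12 h h' h1).elim
  · exact baseR h h' hb h1

lemma caseA33 (h : SideFacts S a b c d) (h' : SideFacts S' a' b' c' d')
    (hc : N.parent c' = N.parent c) : SidesAligned S S' a b c d a' b' c' d' := by
  obtain ⟨tc, hp⟩ := vertex_cmp N h.nbC h'.nbC hc h.nlB h.nlD h'.nlB h'.nlD h.dBD h'.dBD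
  rcases hp with ⟨h1, _⟩ | ⟨h1, _⟩
  · exact baseA h h' h1 hc
  · exact (caseX24 h h' h1).elim

lemma caseR32 (h : SideFacts S a b c d) (h' : SideFacts S' a' b' c' d')
    (hc : N.parent c' = N.parent b) : SidesRev S S' a b c d a' b' c' d' := by
  obtain ⟨tc, hp⟩ := vertex_cmp N h.nbB h'.nbC hc h.nlA h.nlC h'.nlB h'.nlD h.dAC h'.dBD
  rcases hp with ⟨h1, _⟩ | ⟨h1, _⟩
  · exact (caseX21 h h' h1).elim
  · exact baseR h h' h1 hc

lemma case11 (h : SideFacts S a b c d) (h' : SideFacts S' a' b' c' d')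
    (ha : N.parent a' = N.parent a) : SidesAligned S S' a b c d a' b' c' d' := by
  obtain ⟨ta, hp⟩ := vertex_cmp N h.nbA h'.nbA ha h.genU.1 h.nlB h'.genU.1 h'.nlB
    h.dUB h'.dUB
  rcases hp with ⟨_, h1⟩ | ⟨h1, _⟩
  · exact caseA22 h h' h1
  · exact absurd h1 (gen_ne h'.genU h.ngB)

lemma case14 (h : SideFacts S a b c d) (h' : SideFacts S' a' b' c' d')
    (ha : N.parent a' = N.parent d) : SidesRev S S' a b c d a' b' c' d' := by
  obtain ⟨ta, hp⟩ := vertex_cmp N h.nbD h'.nbA ha h.nlC h.genW.1 h'.genU.1 h'.nlB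
    h.dCW h'.dUB
  rcases hp with ⟨h1, _⟩ | ⟨_, h1⟩
  · exact absurd h1 (gen_ne h'.genU h.ngC)
  · exact caseR23 h h' h1

lemma case41 (h : SideFacts S a b c d) (h' : SideFacts S' a' b' c' d')
    (hd : N.parent d' = N.parent a) : SidesRev S S' a b c d a' b' c' d' := by
  obtain ⟨td, hp⟩ := vertex_cmp N h.nbA h'.nbD hd h.genU.1 h.nlB h'.nlC h'.genW.1
    h.dUB h'.dCW
  rcases hp with ⟨h1, _⟩ | ⟨h1, _⟩
  · exact absurd h1.symm (gen_ne h.genU h'.ngC)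
  · exact caseR32 h h' h1

lemma case44 (h : SideFacts S a b c d) (h' : SideFacts S' a' b' c' d')
    (hd : N.parent d' = N.parent d) : SidesAligned S S' a b c d a' b' c' d' := by
  obtain ⟨td, hp⟩ := vertex_cmp N h.nbD h'.nbD hd h.nlC h.genW.1 h'.nlC h'.genW.1
    h.dCW h'.dCW
  rcases hp with ⟨h1, _⟩ | ⟨h1, _⟩
  · exact caseA33 h h' h1
  · exact absurd h1 (gen_ne h.genW h'.ngC).symm

/-- trichotomy: two decorated sides either carry disjoint taxa or coincide
(aligned or reversed). -/
lemma sides_trichotomy (h : SideFacts S a b c d) (h' : SideFacts S' a' b' c' d')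
    (hshared : ¬ Disjoint ({a, b, c, d} : Set X) {a', b', c', d'}) :
    SidesAligned S S' a b c d a' b' c' d' ∨ SidesRev S S' a b c d a' b' c' d' := by
  obtain ⟨t, ht1, ht2⟩ := Set.not_disjoint_iff.mp hshared
  have pe : ∀ {x y : X}, x = y → N.parent x = N.parent y := fun h => by rw [h]
  rcases ht2 with rfl | rfl | rfl | rfl <;> rcases ht1 with h0 | h0 | h0 | h0
  · exact Or.inl (case11 h h' (pe h0))
  · exact (caseX12 h h' (pe h0)).elim
  · exact (caseX13 h h' (pe h0)).elim
  · exact Or.inr (case14 h h' (pe h0))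
  · exact (caseX21 h h' (pe h0)).elim
  · exact Or.inl (caseA22 h h' (pe h0))
  · exact Or.inr (caseR23 h h' (pe h0))
  · exact (caseX24 h h' (pe h0)).elim
  · exact (caseX31 h h' (pe h0)).elim
  · exact Or.inr (caseR32 h h' (pe h0))
  · exact Or.inl (caseA33 h h' (pe h0))
  · exact (caseX34 h h' (pe h0)).elim
  · exact Or.inr (case41 h h' (pe h0))
  · exact (caseX42 h h' (pe h0)).elim
  · exact (caseX43 h h' (pe h0)).elim
  · exact Or.inl (case44 h h' (pe h0))

/-- In either coincidence case the edge sets agree. -/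
lemma edgeSet_eq_of_rel (h : SideFacts S a b c d) (h' : SideFacts S' a' b' c' d')
    (hrel : SidesAligned S S' a b c d a' b' c' d' ∨ SidesRev S S' a b c d a' b' c' d') :
    S'.edgeSet = S.edgeSet := by
  ext e
  rcases hrel with ⟨ta, tb, tc, td, hu, hw⟩ | ⟨ta, tb, tc, td, hu, hw⟩
  · simp only [NSide.edgeSet, Set.mem_setOf_eq, h.hedges, h'.hedges, ta, tb, tc, td, hu, hw]
  · simp only [NSide.edgeSet, Set.mem_setOf_eq, h.hedges, h'.hedges, ta, tb, tc, td, hu, hw,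
      List.mem_cons, List.not_mem_nil, or_false]
    constructor
    · intro h1
      rcases h1 with h1|h1|h1|h1|h1 <;> rw [h1]
      · exact Or.inr (Or.inr (Or.inr (Or.inr Sym2.eq_swap)))
      · exact Or.inr (Or.inr (Or.inr (Or.inl Sym2.eq_swap)))
      · exact Or.inr (Or.inr (Or.inl Sym2.eq_swap))
      · exact Or.inr (Or.inl Sym2.eq_swap)
      · exact Or.inl Sym2.eq_swap
    · intro h1
      rcases h1 with h1|h1|h1|h1|h1 <;> rw [h1]
      · exact Or.inr (Or.inr (Or.inr (Or.inr Sym2.eq_swap)))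
      · exact Or.inr (Or.inr (Or.inr (Or.inl Sym2.eq_swap)))
      · exact Or.inr (Or.inr (Or.inl Sym2.eq_swap))
      · exact Or.inr (Or.inl Sym2.eq_swap)
      · exact Or.inl Sym2.eq_swap

end Cases


open SimpleGraph

variable {X : Type} {T : PhyloTree X} {N : PhyloNetwork X}

lemma walk_snd {V : Type*} {G : SimpleGraph V} {u w : V} (p : G.Walk u w)
    (h : 0 < p.length) :
    ∃ (s : V) (hadj : G.Adj u s) (q : G.Walk s w), p = q.cons hadj := by
  cases p with
  | nil => simp at h
  | cons hadj q => exact ⟨_, hadj, q, rfl⟩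

namespace TreeImage

/-- the pendant walk of a taxon, rebased at the network leaf -/
noncomputable def pwalk (I : TreeImage T N) (x : X) :
    N.graph.Walk (N.leaf x) (I.emb (T.parent x)) :=
  (I.walk (T.adj_leaf_parent x)).copy (I.leaf_map x) rfl

lemma pwalk_isPath (I : TreeImage T N) (x : X) : (I.pwalk x).IsPath := by
  simpa [pwalk] using I.walk_isPath (T.adj_leaf_parent x)

lemma pwalk_support (I : TreeImage T N) (x : X) :
    (I.pwalk x).support = (I.walk (T.adj_leaf_parent x)).support := by
  simp [pwalk]

lemma pwalk_edges (I : TreeImage T N) (x : X) :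
    (I.pwalk x).edges = (I.walk (T.adj_leaf_parent x)).edges := by
  simp [pwalk]

lemma emb_parent_ne_leaf_self (I : TreeImage T N) (x : X) :
    I.emb (T.parent x) ≠ N.leaf x := by
  intro h
  rw [← I.leaf_map x] at h
  exact T.parent_ne_leaf_self x (I.inj h)

lemma pwalk_len_pos (I : TreeImage T N) (x : X) : 0 < (I.pwalk x).length := by
  rcases Nat.eq_zero_or_pos (I.pwalk x).length with h | h
  · exact absurd (SimpleGraph.Walk.eq_of_length_eq_zero h).symm
      (I.emb_parent_ne_leaf_self x)
  · exact h

lemma parent_mem_pwalk (I : TreeImage T N) (x : X) :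
    N.parent x ∈ (I.pwalk x).support := by
  obtain ⟨q, h, he⟩ := PhyloNetwork.walk_from_leaf (I.pwalk x) (I.pwalk_len_pos x)
  rw [he, SimpleGraph.Walk.support_cons]
  exact List.mem_cons_of_mem _ q.start_mem_support

/-- key disjointness lemma: a shared non-leaf vertex of two pendant walks is the
image of both parents -/
lemma shared_parent (I : TreeImage T N) {x y : X} (hxy : x ≠ y)
    (hxlp : T.parent x ≠ T.leaf y) (hylp : T.parent y ≠ T.leaf x) {v : N.V}
    (hv1 : v ∈ (I.pwalk x).support) (hv2 : v ∈ (I.pwalk y).support)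
    (hvleaf : v ∉ Set.range N.leaf) :
    v = I.emb (T.parent x) ∧ v = I.emb (T.parent y) := by
  rw [I.pwalk_support] at hv1 hv2
  have hne : s(T.leaf x, T.parent x) ≠ s(T.leaf y, T.parent y) := by
    simp only [ne_eq, Sym2.eq_iff, not_or]
    push_neg
    exact ⟨fun h1 => (hxy (T.leaf_inj h1)).elim, fun _ => hxlp⟩
  constructor
  · rcases I.internally_disjoint (T.adj_leaf_parent y) (T.adj_leaf_parent x)
      hne.symm v hv2 hv1 with h | h
    · exact absurd (h.trans (I.leaf_map x)) (fun he => hvleaf ⟨x, he.symm⟩)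
    · exact h
  · rcases I.internally_disjoint (T.adj_leaf_parent x) (T.adj_leaf_parent y)
      hne v hv1 hv2 with h | h
    · exact absurd (h.trans (I.leaf_map y)) (fun he => hvleaf ⟨y, he.symm⟩)
    · exact h

/-- at the image of an internal tree vertex there are three distinct image edges -/
lemma three_image_edges (I : TreeImage T N) {P : T.V} (hP : P ∉ Set.range T.leaf) :
    ∃ e1 e2 e3 : Sym2 N.V, e1 ≠ e2 ∧ e1 ≠ e3 ∧ e2 ≠ e3 ∧
      e1 ∈ I.edges ∧ e2 ∈ I.edges ∧ e3 ∈ I.edges ∧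
      I.emb P ∈ e1 ∧ I.emb P ∈ e2 ∧ I.emb P ∈ e3 := by
  obtain ⟨n1, n2, n3, h12, h13, h23, hset⟩ := Set.ncard_eq_three.mp (T.deg_internal P hP)
  have ha1 : T.graph.Adj P n1 := by
    have : n1 ∈ T.graph.neighborSet P := by rw [hset]; simp
    exact this
  have ha2 : T.graph.Adj P n2 := by
    have : n2 ∈ T.graph.neighborSet P := by rw [hset]; simp
    exact this
  have ha3 : T.graph.Adj P n3 := by
    have : n3 ∈ T.graph.neighborSet P := by rw [hset]; simp
    exact this
  -- second vertices of the three walks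
  have key : ∀ {m : T.V} (h : T.graph.Adj P m),
      ∃ s : N.V, s ≠ I.emb P ∧ s(I.emb P, s) ∈ (I.walk h).edges := by
    intro m h
    have hlen : 0 < (I.walk h).length := by
      rcases Nat.eq_zero_or_pos (I.walk h).length with h0 | h0
      · exact absurd (I.inj (SimpleGraph.Walk.eq_of_length_eq_zero h0)) h.ne
      · exact h0
    obtain ⟨s, hadj, q, hw⟩ := walk_snd (I.walk h) hlen
    refine ⟨s, ?_, ?_⟩
    · have hp := I.walk_isPath h
      rw [hw] at hp
      intro he
      have := hp.2
      simp only [SimpleGraph.Walk.support_cons, List.nodup_cons] at this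
      exact this.1 (he ▸ q.start_mem_support)
    · rw [hw]; simp
  obtain ⟨s1, hs1ne, hs1⟩ := key ha1
  obtain ⟨s2, hs2ne, hs2⟩ := key ha2
  obtain ⟨s3, hs3ne, hs3⟩ := key ha3
  -- distinctness of second vertices
  have hdist : ∀ {m m' : T.V} (h : T.graph.Adj P m) (h' : T.graph.Adj P m')
      {s s' : N.V}, m ≠ m' → s ≠ I.emb P → s(I.emb P, s) ∈ (I.walk h).edges →
      s(I.emb P, s') ∈ (I.walk h').edges → s ≠ s' := by
    intro m m' h h' s s' hmm hsP hs hs'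
    intro he
    subst he
    have hedne : s(P, m) ≠ s(P, m') := by
      simp only [ne_eq, Sym2.eq_iff, not_or]
      push_neg
      exact ⟨fun _ => hmm, fun h1 => (h'.ne h1).elim⟩
    have hm1 : s ∈ (I.walk h).support := (I.walk h).snd_mem_support_of_mem_edges hs
    have hm2 : s ∈ (I.walk h').support := (I.walk h').snd_mem_support_of_mem_edges hs'
    rcases I.internally_disjoint h h' hedne s hm1 hm2 with h1 | h1
    · exact hsP h1
    · -- s = emb m'; symmetric application
      rcases I.internally_disjoint h' h hedne.symm s hm2 hm1 with h2 | h2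
      · exact hsP h2
      · exact hmm (I.inj (h2.symm.trans h1).symm ▸ rfl)
  have d12 : s1 ≠ s2 := hdist ha1 ha2 h12 hs1ne hs1 hs2
  have d13 : s1 ≠ s3 := hdist ha1 ha3 h13 hs1ne hs1 hs3
  have d23 : s2 ≠ s3 := hdist ha2 ha3 h23 hs2ne hs2 hs3
  refine ⟨s(I.emb P, s1), s(I.emb P, s2), s(I.emb P, s3), ?_, ?_, ?_,
    ⟨_, _, ha1, hs1⟩, ⟨_, _, ha2, hs2⟩, ⟨_, _, ha3, hs3⟩, by simp, by simp, by simp⟩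
  · simp only [ne_eq, Sym2.eq_iff, not_or]; push_neg
    exact ⟨fun _ => d12, fun h1 => (hs2ne h1.symm).elim⟩
  · simp only [ne_eq, Sym2.eq_iff, not_or]; push_neg
    exact ⟨fun _ => d13, fun h1 => (hs3ne h1.symm).elim⟩
  · simp only [ne_eq, Sym2.eq_iff, not_or]; push_neg
    exact ⟨fun _ => d23, fun h1 => (hs3ne h1.symm).elim⟩

end TreeImage

namespace TreeImage

/-- The image of a parent cannot sit at a vertex with only two available edges. -/
lemma emb_parent_not_at (I : TreeImage T N) {R : Set (Sym2 N.V)}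
    (hR : I.edges ⊆ R) {x : X} {v : N.V} (hvnl : v ∉ Set.range N.leaf)
    (f1 f2 : Sym2 N.V) (hface : ∀ e ∈ R, v ∈ e → e = f1 ∨ e = f2) :
    I.emb (T.parent x) ≠ v := by
  intro he
  have hPint : T.parent x ∉ Set.range T.leaf := by
    rintro ⟨y, hy⟩
    rw [← hy] at he
    rw [I.leaf_map y] at he
    exact hvnl ⟨y, he⟩
  obtain ⟨e1, e2, e3, d12, d13, d23, m1, m2, m3, v1, v2, v3⟩ :=
    I.three_image_edges hPint
  rw [he] at v1 v2 v3
  rcases hface e1 (hR m1) v1 with h1 | h1 <;>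
  rcases hface e2 (hR m2) v2 with h2 | h2 <;>
  rcases hface e3 (hR m3) v3 with h3 | h3
  · exact d12 (h1.trans h2.symm)
  · exact d12 (h1.trans h2.symm) |>.elim
  · exact d13 (h1.trans h3.symm)
  · exact d23 (h2.trans h3.symm)
  · exact d23 (h2.trans h3.symm)
  · exact d13 (h1.trans h3.symm)
  · exact d12 (h1.trans h2.symm)
  · exact d12 (h1.trans h2.symm)

end TreeImage

namespace SpanExt

variable (E : SpanExt T N)

lemma graph_le : SimpleGraph.fromEdgeSet E.R ≤ N.graph := by
  intro u v h
  rw [SimpleGraph.fromEdgeSet_adj] at h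
  exact (N.graph.mem_edgeSet).mp (E.sub h.1)

/-- every pendant leaf edge belongs to every spanning tree -/
lemma leaf_edge_mem (x : X) : s(N.leaf x, N.parent x) ∈ E.R := by
  have hconn := E.isTree.isConnected
  obtain ⟨w⟩ := hconn.preconnected (N.leaf x) (N.parent x)
  have hlen : 0 < w.length := by
    rcases Nat.eq_zero_or_pos w.length with h0 | h0
    · exact absurd (SimpleGraph.Walk.eq_of_length_eq_zero h0).symm
        (N.parent_ne_leaf_self x)
    · exact h0
  obtain ⟨m, hadj, q, hw⟩ := walk_snd w hlen
  have hm : m = N.parent x := N.eq_parent_of_adj_leaf (E.graph_le hadj)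
  rw [SimpleGraph.fromEdgeSet_adj] at hadj
  rw [← hm]
  exact hadj.1

lemma img_reachable (s t : T.V) :
    (SimpleGraph.fromEdgeSet E.img.edges).Reachable (E.img.emb s) (E.img.emb t) := by
  obtain ⟨p⟩ := T.isTree.isConnected.preconnected s t
  induction p with
  | nil => rfl
  | cons hadj q ih =>
    rename_i u u' t'
    refine SimpleGraph.Reachable.trans ?_ ih
    have hw := E.img.walk hadj
    have hsub : ∀ e ∈ (E.img.walk hadj).edges,
        e ∈ (SimpleGraph.fromEdgeSet E.img.edges).edgeSet := by
      intro e he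
      rw [SimpleGraph.edgeSet_fromEdgeSet]
      refine ⟨⟨_, _, hadj, he⟩, ?_⟩
      have := (E.img.walk hadj).edges_subset_edgeSet he
      exact fun hd => SimpleGraph.not_isDiag_of_mem_edgeSet _ this hd
    exact ⟨(E.img.walk hadj).transfer _ hsub⟩

/-- an `R`-edge on the unique `R`-path between two leaves is an image edge -/
lemma mid_edge_in_image {x y : X} {vx vy : N.V}
    (hvx : vx = N.parent x) (hvy : vy = N.parent y) (hxy : x ≠ y)
    (h2 : s(vx, vy) ∈ E.R) (hne : vx ≠ vy)
    (hnlx : vx ∉ Set.range N.leaf) (hnly : vy ∉ Set.range N.leaf) :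
    s(vx, vy) ∈ E.img.edges := by
  classical
  set G := SimpleGraph.fromEdgeSet E.R with hG
  have hlx : N.leaf x ≠ vx := fun h => hnlx ⟨x, h⟩
  have hly : N.leaf y ≠ vy := fun h => hnly ⟨y, h⟩
  have hlxy : N.leaf x ≠ N.leaf y := fun h => hxy (N.leaf_inj h)
  have hlxvy : N.leaf x ≠ vy := fun h => hnly ⟨x, h⟩
  have hlyvx : N.leaf y ≠ vx := fun h => hnlx ⟨y, h⟩
  have a1 : G.Adj (N.leaf x) vx := by
    rw [hG, SimpleGraph.fromEdgeSet_adj]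
    exact ⟨hvx ▸ E.leaf_edge_mem x, hlx⟩
  have a2 : G.Adj vx vy := by
    rw [hG, SimpleGraph.fromEdgeSet_adj]
    exact ⟨h2, hne⟩
  have a3 : G.Adj vy (N.leaf y) := by
    rw [hG, SimpleGraph.fromEdgeSet_adj]
    have := E.leaf_edge_mem y
    rw [← hvy] at this
    exact ⟨Sym2.eq_swap ▸ this, fun h => hly h.symm⟩
  set Pex : G.Walk (N.leaf x) (N.leaf y) :=
    SimpleGraph.Walk.cons a1 (SimpleGraph.Walk.cons a2 a3.toWalk) with hPex
  have hPexPath : Pex.IsPath := by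
    rw [SimpleGraph.Walk.isPath_def, hPex]
    have e1 : vx ≠ N.leaf y := fun h => hlyvx h.symm
    have e2 : vy ≠ N.leaf y := fun h => hly h.symm
    simp [hlx, hlxvy, hlx.symm, hlxvy.symm, hlxy, hne, e1, e2]
  -- walk inside the image
  have hreach : (SimpleGraph.fromEdgeSet E.img.edges).Reachable (N.leaf x) (N.leaf y) := by
    have := E.img_reachable (T.leaf x) (T.leaf y)
    rwa [E.img.leaf_map, E.img.leaf_map] at this
  obtain ⟨Wimg⟩ := hreach
  have hWsub : ∀ e ∈ Wimg.edges, e ∈ G.edgeSet := by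
    intro e he
    have := Wimg.edges_subset_edgeSet he
    rw [SimpleGraph.edgeSet_fromEdgeSet] at this
    rw [hG, SimpleGraph.edgeSet_fromEdgeSet]
    exact ⟨E.extends_img this.1, this.2⟩
  set W : G.Walk (N.leaf x) (N.leaf y) := Wimg.transfer G hWsub with hW
  have huniq := E.isTree.existsUnique_path (N.leaf x) (N.leaf y)
  have heq : (W.toPath : G.Walk (N.leaf x) (N.leaf y)) = Pex :=
    huniq.unique W.toPath.2 hPexPath
  have hmem : s(vx, vy) ∈ (W.toPath : G.Walk (N.leaf x) (N.leaf y)).edges := by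
    rw [heq, hPex]
    simp
  have : s(vx, vy) ∈ W.edges := W.edges_toPath_subset hmem
  rw [hW] at this
  rw [SimpleGraph.Walk.edges_transfer] at this
  have := Wimg.edges_subset_edgeSet this
  rw [SimpleGraph.edgeSet_fromEdgeSet] at this
  exact this.1

end SpanExt

namespace TreeImage

lemma walk_eq_pwalk_support (I : TreeImage T N) {x : X} {u₀ v₀ : T.V}
    (h₀ : T.graph.Adj u₀ v₀) (hc : s(u₀, v₀) = s(T.leaf x, T.parent x)) :
    ∀ w : N.V, w ∈ (I.walk h₀).support → w ∈ (I.pwalk x).support := by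
  intro w hw
  rw [I.pwalk_support]
  rw [Sym2.eq_iff] at hc
  rcases hc with ⟨h1, h2⟩ | ⟨h1, h2⟩
  · subst h1; subst h2
    exact hw
  · subst h1; subst h2
    have : I.walk h₀ = (I.walk (T.adj_leaf_parent x)).reverse := by
      have h3 : h₀ = (T.adj_leaf_parent x).symm := rfl
      rw [h3, I.walk_symm]
    rw [this, SimpleGraph.Walk.support_reverse, List.mem_reverse] at hw
    exact hw

lemma parents_eq_or_adj (I : TreeImage T N) {x y z : X} (hxy : x ≠ y)
    (hxz : x ≠ z) (hyz : y ≠ z) {vx vy : N.V}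
    (hvx : vx = N.parent x) (hvy : vy = N.parent y)
    (hedge : s(vx, vy) ∈ I.edges)
    (hnlx : vx ∉ Set.range N.leaf) (hnly : vy ∉ Set.range N.leaf) (hne : vx ≠ vy) :
    T.parent x = T.parent y ∨
      (T.graph.Adj (T.parent x) (T.parent y) ∧
        I.emb (T.parent x) = vx ∧ I.emb (T.parent y) = vy) := by
  classical
  obtain ⟨u₀, v₀, h₀, hmem⟩ := hedge
  have hpx : T.parent x ≠ T.leaf y := T.parent_ne_leaf hxy hxz hyz
  have hpy : T.parent y ≠ T.leaf x := T.parent_ne_leaf hxy.symm hyz hxz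
  have hvxs : vx ∈ (I.walk h₀).support :=
    (I.walk h₀).fst_mem_support_of_mem_edges hmem
  have hvys : vy ∈ (I.walk h₀).support :=
    (I.walk h₀).snd_mem_support_of_mem_edges hmem
  have hvxp : vx ∈ (I.pwalk x).support := by
    rw [hvx]; exact I.parent_mem_pwalk x
  have hvyp : vy ∈ (I.pwalk y).support := by
    rw [hvy]; exact I.parent_mem_pwalk y
  by_cases hc1 : s(u₀, v₀) = s(T.leaf x, T.parent x)
  · have hvyx : vy ∈ (I.pwalk x).support := I.walk_eq_pwalk_support h₀ hc1 vy hvys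
    obtain ⟨he1, he2⟩ := I.shared_parent hxy hpx hpy hvyx hvyp hnly
    exact Or.inl (I.inj (he1.symm.trans he2))
  by_cases hc2 : s(u₀, v₀) = s(T.leaf y, T.parent y)
  · have hvxy : vx ∈ (I.pwalk y).support := I.walk_eq_pwalk_support h₀ hc2 vx hvxs
    obtain ⟨he1, he2⟩ := I.shared_parent hxy hpx hpy hvxp hvxy hnlx
    exact Or.inl (I.inj (he1.symm.trans he2))
  -- generic case
  have hAx : vx = I.emb (T.parent x) := by
    have hpws : vx ∈ (I.walk (T.adj_leaf_parent x)).support := by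
      rwa [I.pwalk_support] at hvxp
    rcases I.internally_disjoint h₀ (T.adj_leaf_parent x) hc1 vx hvxs hpws with h | h
    · rw [I.leaf_map] at h
      exact absurd h (fun he => hnlx (he ▸ ⟨x, rfl⟩))
    · exact h
  have hAy : vy = I.emb (T.parent y) := by
    have hpws : vy ∈ (I.walk (T.adj_leaf_parent y)).support := by
      rwa [I.pwalk_support] at hvyp
    rcases I.internally_disjoint h₀ (T.adj_leaf_parent y) hc2 vy hvys hpws with h | h
    · rw [I.leaf_map] at h
      exact absurd h (fun he => hnly (he ▸ ⟨y, rfl⟩))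
    · exact h
  have hBx : vx = I.emb u₀ ∨ vx = I.emb v₀ := by
    have hpws : vx ∈ (I.walk (T.adj_leaf_parent x)).support := by
      rwa [I.pwalk_support] at hvxp
    exact I.internally_disjoint (T.adj_leaf_parent x) h₀ (Ne.symm hc1) vx hpws hvxs
  have hBy : vy = I.emb u₀ ∨ vy = I.emb v₀ := by
    have hpws : vy ∈ (I.walk (T.adj_leaf_parent y)).support := by
      rwa [I.pwalk_support] at hvyp
    exact I.internally_disjoint (T.adj_leaf_parent y) h₀ (Ne.symm hc2) vy hpws hvys
  rcases hBx with hx0 | hx0 <;> rcases hBy with hy0 | hy0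
  · exact absurd (hx0.trans hy0.symm) hne
  · have e1 : T.parent x = u₀ := I.inj (hAx.symm.trans hx0)
    have e2 : T.parent y = v₀ := I.inj (hAy.symm.trans hy0)
    exact Or.inr ⟨by rw [e1, e2]; exact h₀, hAx.symm, hAy.symm⟩
  · have e1 : T.parent x = v₀ := I.inj (hAx.symm.trans hx0)
    have e2 : T.parent y = u₀ := I.inj (hAy.symm.trans hy0)
    exact Or.inr ⟨by rw [e1, e2]; exact h₀.symm, hAx.symm, hAy.symm⟩
  · exact absurd (hx0.trans hy0.symm) hne

end TreeImage


open SimpleGraph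

variable {X : Type} {T : PhyloTree X} {N : PhyloNetwork X} {S : NSide N} {a b c d : X}

/-- covered step for the pair (a,b) -/
lemma stepAB (E : SpanExt T N) (h : SideFacts S a b c d)
    (hR : s(N.parent a, N.parent b) ∈ E.R) :
    T.parent a = T.parent b ∨
      (T.graph.Adj (T.parent a) (T.parent b) ∧
        E.img.emb (T.parent a) = N.parent a ∧ E.img.emb (T.parent b) = N.parent b) :=
  E.img.parents_eq_or_adj h.taxaAB h.taxaAC h.taxaBC rfl rfl
    (E.mid_edge_in_image rfl rfl h.taxaAB hR h.dAB h.nlA h.nlB) h.nlA h.nlB h.dAB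

lemma stepBC (E : SpanExt T N) (h : SideFacts S a b c d)
    (hR : s(N.parent b, N.parent c) ∈ E.R) :
    T.parent b = T.parent c ∨
      (T.graph.Adj (T.parent b) (T.parent c) ∧
        E.img.emb (T.parent b) = N.parent b ∧ E.img.emb (T.parent c) = N.parent c) :=
  E.img.parents_eq_or_adj h.taxaBC (h.taxaAB.symm) (h.taxaAC.symm) rfl rfl
    (E.mid_edge_in_image rfl rfl h.taxaBC hR h.dBC h.nlB h.nlC) h.nlB h.nlC h.dBC

lemma stepCD (E : SpanExt T N) (h : SideFacts S a b c d)
    (hR : s(N.parent c, N.parent d) ∈ E.R) :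
    T.parent c = T.parent d ∨
      (T.graph.Adj (T.parent c) (T.parent d) ∧
        E.img.emb (T.parent c) = N.parent c ∧ E.img.emb (T.parent d) = N.parent d) :=
  E.img.parents_eq_or_adj h.taxaCD (h.taxaAC.symm) (h.taxaAD.symm) rfl rfl
    (E.mid_edge_in_image rfl rfl h.taxaCD hR h.dCD h.nlC h.nlD) h.nlC h.nlD h.dCD

/-- on the omitting tree, `{b,c}` is a cherry -/
lemma cherryB (E : SpanExt T N) (h : SideFacts S a b c d)
    (hnR : s(N.parent a, N.parent b) ∉ E.R)
    (hRbc : s(N.parent b, N.parent c) ∈ E.R) :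
    T.parent b = T.parent c := by
  rcases stepBC E h hRbc with he | ⟨_, hembb, _⟩
  · exact he
  · exfalso
    refine E.img.emb_parent_not_at E.extends_img h.nlB
      s(N.leaf b, N.parent b) s(N.parent b, N.parent c) ?_ hembb
    intro e heR hpbe
    obtain ⟨m, rfl⟩ := Sym2.mem_iff_exists.mp hpbe
    have hadj : N.graph.Adj (N.parent b) m := (N.graph.mem_edgeSet).mp (E.sub heR)
    have hm : m ∈ N.graph.neighborSet (N.parent b) := hadj
    rw [h.nbB] at hm
    rcases hm with hm | hm | hm
    · subst hm; exact Or.inl Sym2.eq_swap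
    · subst hm; exact absurd (Sym2.eq_swap ▸ heR) hnR
    · subst hm; exact Or.inr rfl


open SimpleGraph

variable {X : Type}

lemma third_elem {α : Type*} {s : Set α} (hfin : s.Finite) {p q : α}
    (hs : s.ncard = 3) (hp : p ∈ s) (hq : q ∈ s) (hpq : p ≠ q) :
    ∃ r ∈ s, r ≠ p ∧ r ≠ q := by
  classical
  by_contra hcon
  push_neg at hcon
  have hsub : s ⊆ {p, q} := by
    intro r hr
    rcases eq_or_ne r p with h | h
    · exact Or.inl h
    · exact Or.inr (hcon r hr h)
  have : s.ncard ≤ ({p, q} : Set α).ncard := Set.ncard_le_ncard hsub (Set.toFinite _)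
  have h2 : ({p, q} : Set α).ncard ≤ 2 := by
    apply le_trans (Set.ncard_insert_le _ _)
    simp
  omega

/-- a cherry yields a pendant set -/
lemma cherry_pendantSet (T : PhyloTree X) {b c z : X} (hbc : b ≠ c) (hbz : b ≠ z)
    (hcz : c ≠ z) (hch : T.parent b = T.parent c) : T.pendantSet {b, c} := by
  classical
  haveI : Finite T.V := T.finV
  have hPint : T.parent b ∉ Set.range T.leaf := by
    rintro ⟨y, hy⟩
    by_cases hyb : y = b
    · exact T.parent_ne_leaf_self b (hyb ▸ hy).symm
    · have hyw : ∃ w : X, y ≠ w ∧ b ≠ w := by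
        by_cases hyz : y = z
        · exact ⟨c, by rw [hyz]; exact hcz.symm, hbc⟩
        · exact ⟨z, hyz, hbz⟩
      obtain ⟨w, hyw, hbw⟩ := hyw
      exact T.parent_ne_leaf (Ne.symm hyb) hbw hyw hy.symm
  have hlb : T.leaf b ∈ T.graph.neighborSet (T.parent b) := (T.adj_leaf_parent b).symm
  have hlc : T.leaf c ∈ T.graph.neighborSet (T.parent b) := by
    rw [hch]; exact (T.adj_leaf_parent c).symm
  have hlbc : T.leaf b ≠ T.leaf c := fun h => hbc (T.leaf_inj h)
  obtain ⟨zv, hzv, hzvb, hzvc⟩ := third_elem (Set.toFinite _)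
    (T.deg_internal _ hPint) hlb hlc hlbc
  have hadjPz : T.graph.Adj (T.parent b) zv := hzv
  have hnbP : T.graph.neighborSet (T.parent b) = {T.leaf b, T.leaf c, zv} := by
    have hsub : ({T.leaf b, T.leaf c, zv} : Set T.V) ⊆
        T.graph.neighborSet (T.parent b) := by
      intro t ht
      rcases ht with rfl | rfl | rfl
      · exact hlb
      · exact hlc
      · exact hzv
    refine (Set.eq_of_subset_of_ncard_le hsub ?_ (Set.toFinite _)).symm
    rw [T.deg_internal _ hPint]
    rw [Set.ncard_insert_of_notMem (by simp [hlbc, (Ne.symm hzvb)]) (Set.toFinite _),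
      Set.ncard_insert_of_notMem (by simp [Ne.symm hzvc]) (Set.toFinite _),
      Set.ncard_singleton]
  refine ⟨T.parent b, zv, hadjPz, ?_⟩
  have hPzb : s(T.leaf b, T.parent b) ∉ ({s(T.parent b, zv)} : Set (Sym2 T.V)) := by
    simp only [Set.mem_singleton_iff, Sym2.eq_iff]
    push_neg
    exact ⟨fun h => ((T.parent_ne_leaf_self b) h.symm).elim,
      fun h => (hzvb h.symm).elim⟩
  have hPzc : s(T.leaf c, T.parent b) ∉ ({s(T.parent b, zv)} : Set (Sym2 T.V)) := by
    simp only [Set.mem_singleton_iff, Sym2.eq_iff]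
    push_neg
    refine ⟨fun h => ?_, fun h => (hzvc h.symm).elim⟩
    exfalso
    rw [hch] at h
    exact T.parent_ne_leaf_self c h.symm
  apply Set.eq_of_subset_of_subset
  · intro x hx
    rcases hx with rfl | rfl
    · exact SimpleGraph.Adj.reachable (by
        rw [SimpleGraph.deleteEdges_adj]
        exact ⟨T.adj_leaf_parent x, hPzb⟩)
    · refine SimpleGraph.Adj.reachable ?_
      rw [SimpleGraph.deleteEdges_adj]
      constructor
      · have := T.adj_leaf_parent x
        rwa [← hch] at this
      · exact hPzc
  · intro x hx
    simp only [Set.mem_setOf_eq] at hx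
    obtain ⟨W0⟩ := hx.symm
    obtain ⟨W, hWpath⟩ : ∃ W : (T.graph.deleteEdges {s(T.parent b, zv)}).Walk
        (T.parent b) (T.leaf x), W.IsPath := ⟨W0.toPath.1, W0.toPath.2⟩
    rcases Nat.eq_zero_or_pos W.length with hlen | hlen
    · exact absurd ⟨x, (SimpleGraph.Walk.eq_of_length_eq_zero hlen).symm⟩ hPint
    obtain ⟨m, hadj, q, hWeq⟩ := walk_snd W hlen
    rw [hWeq] at hWpath
    have hTm : T.graph.Adj (T.parent b) m :=
      ((SimpleGraph.deleteEdges_adj).mp hadj).1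
    have hmz : m ≠ zv := by
      intro h; subst h
      exact ((SimpleGraph.deleteEdges_adj).mp hadj).2 rfl
    have hm : m ∈ T.graph.neighborSet (T.parent b) := hTm
    rw [hnbP] at hm
    have hPnot : T.parent b ∉ q.support := by
      have := hWpath.2
      simp only [SimpleGraph.Walk.support_cons, List.nodup_cons] at this
      exact this.1
    rcases hm with hm | hm | hm
    · subst hm
      rcases Nat.eq_zero_or_pos q.length with hlen2 | hlen2
      · exact Or.inl (T.leaf_inj (SimpleGraph.Walk.eq_of_length_eq_zero hlen2)).symm
      · exfalso
        obtain ⟨m2, hadj2, q2, hq2⟩ := walk_snd q hlen2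
        have hTm2 : T.graph.Adj (T.leaf b) m2 :=
          ((SimpleGraph.deleteEdges_adj).mp hadj2).1
        have hm2 : m2 = T.parent b := T.eq_parent_of_adj_leaf hTm2
        apply hPnot
        rw [hq2, SimpleGraph.Walk.support_cons]
        right
        subst hm2
        exact q2.start_mem_support
    · subst hm
      rcases Nat.eq_zero_or_pos q.length with hlen2 | hlen2
      · exact Or.inr (T.leaf_inj (SimpleGraph.Walk.eq_of_length_eq_zero hlen2)).symm
      · exfalso
        obtain ⟨m2, hadj2, q2, hq2⟩ := walk_snd q hlen2
        have hTm2 : T.graph.Adj (T.leaf c) m2 :=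
          ((SimpleGraph.deleteEdges_adj).mp hadj2).1
        have hm2 : m2 = T.parent c := T.eq_parent_of_adj_leaf hTm2
        apply hPnot
        rw [hq2, SimpleGraph.Walk.support_cons]
        right
        subst hm2
        exact Eq.mpr (congrArg (fun v => v ∈ q2.support) hch) q2.start_mem_support
    · exact absurd hm hmz

lemma restrictEqOn_pair (T T' : PhyloTree X) (b c : X) : restrictEqOn T T' {b, c} := by
  intro p hp q hq r hr t ht hinj
  obtain ⟨h1, h2, h3, h4, h5, h6⟩ := inj4_iff.mp hinj
  simp only [Set.mem_insert_iff, Set.mem_singleton_iff] at hp hq hr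
  rcases hp with rfl | rfl <;> rcases hq with rfl | rfl <;> rcases hr with rfl | rfl <;>
    simp_all

lemma red1_of_double_cherry (T T' : PhyloTree X) {b c z : X} (hbc : b ≠ c)
    (hbz : b ≠ z) (hcz : c ≠ z) (h1 : T.parent b = T.parent c)
    (h2 : T'.parent b = T'.parent c) : Red1App T T' := by
  refine ⟨{b, c}, ?_, cherry_pendantSet T hbc hbz hcz h1,
    cherry_pendantSet T' hbc hbz hcz h2, restrictEqOn_pair T T' b c⟩
  rw [Set.ncard_insert_of_notMem (by simp [hbc]) (Set.toFinite _), Set.ncard_singleton]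

lemma isChain3 (T : PhyloTree X) {b c d : X} (hbc : b ≠ c) (hbd : b ≠ d) (hcd : c ≠ d)
    (s1 : T.parent b = T.parent c ∨ T.graph.Adj (T.parent b) (T.parent c))
    (s2 : T.parent c = T.parent d ∨ T.graph.Adj (T.parent c) (T.parent d)) :
    T.isChain [b, c, d] := by
  refine ⟨by simp, by simp [hbc, hbd, hcd], ?_, ?_⟩
  · intro i x y hx hy
    match i with
    | 0 =>
      simp only [List.getElem?_cons_zero, List.getElem?_cons_succ] at hx hy
      injection hx with hx; injection hy with hy
      subst hx; subst hy; exact s1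
    | 1 =>
      simp only [List.getElem?_cons_zero, List.getElem?_cons_succ] at hx hy
      injection hx with hx; injection hy with hy
      subst hx; subst hy; exact s2
    | (n + 2) =>
      simp only [List.getElem?_cons_zero, List.getElem?_cons_succ] at hy
      exact absurd hy (by cases n <;> simp)
  · intro i j x y h1 h2 h3 _ _
    exfalso
    simp only [List.length] at h3
    omega

lemma isChain4 (T : PhyloTree X) {a b c d : X}
    (hab : a ≠ b) (hac : a ≠ c) (had : a ≠ d) (hbc : b ≠ c) (hbd : b ≠ d) (hcd : c ≠ d)
    (s1 : T.parent a = T.parent b ∨ T.graph.Adj (T.parent a) (T.parent b))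
    (s2 : T.parent b = T.parent c ∨ T.graph.Adj (T.parent b) (T.parent c))
    (s3 : T.parent c = T.parent d ∨ T.graph.Adj (T.parent c) (T.parent d))
    (hint : T.parent b ≠ T.parent c) :
    T.isChain [a, b, c, d] := by
  refine ⟨by simp, by simp [hab, hac, had, hbc, hbd, hcd], ?_, ?_⟩
  · intro i x y hx hy
    match i with
    | 0 =>
      simp only [List.getElem?_cons_zero, List.getElem?_cons_succ] at hx hy
      injection hx with hx; injection hy with hy
      subst hx; subst hy; exact s1
    | 1 =>
      simp only [List.getElem?_cons_zero, List.getElem?_cons_succ] at hx hy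
      injection hx with hx; injection hy with hy
      subst hx; subst hy; exact s2
    | 2 =>
      simp only [List.getElem?_cons_zero, List.getElem?_cons_succ] at hx hy
      injection hx with hx; injection hy with hy
      subst hx; subst hy; exact s3
    | (n + 3) =>
      simp only [List.getElem?_cons_zero, List.getElem?_cons_succ] at hy
      exact absurd hy (by cases n <;> simp)
  · intro i j x y h1 h2 h3 hx hy
    simp only [List.length] at h3
    have hij : i = 1 ∧ j = 2 := by omega
    obtain ⟨rfl, rfl⟩ := hij
    simp only [List.getElem?_cons_zero, List.getElem?_cons_succ] at hx hy
    injection hx with hx; injection hy with hy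
    subst hx; subst hy; exact hint

lemma not_isChain4 (T : PhyloTree X) {a b c d : X}
    (hbc : T.parent b = T.parent c) : ¬ T.isChain [a, b, c, d] := by
  intro h
  exact h.2.2.2 1 2 b c (le_refl 1) (by omega) (by simp) rfl rfl hbc

lemma not_pendant3 (T : PhyloTree X) {b c d : X}
    (h1 : T.parent b ≠ T.parent c) (h2 : T.parent d ≠ T.parent c) :
    ¬ T.pendantChain [b, c, d] := by
  rintro ⟨_, hf | hf⟩
  · obtain ⟨x, y, hx, hy, he⟩ := hf
    simp only [List.getElem?_cons_zero, List.getElem?_cons_succ] at hx hy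
    injection hx with hx; injection hy with hy
    subst hx; subst hy
    exact h1 he
  · obtain ⟨x, y, hx, hy, he⟩ := hf
    have hrev : [b, c, d].reverse = [d, c, b] := rfl
    rw [hrev] at hx hy
    simp only [List.getElem?_cons_zero, List.getElem?_cons_succ] at hx hy
    injection hx with hx; injection hy with hy
    subst hx; subst hy
    exact h2 he

lemma red3_of (Tom Tcov : PhyloTree X) {b c d : X}
    (hbc : b ≠ c) (hbd : b ≠ d) (hcd : c ≠ d)
    (F1 : Tom.parent b = Tom.parent c)
    (F2 : Tom.parent c = Tom.parent d ∨ Tom.graph.Adj (Tom.parent c) (Tom.parent d))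
    (F4 : Tcov.parent b = Tcov.parent c ∨ Tcov.graph.Adj (Tcov.parent b) (Tcov.parent c))
    (hcd' : Tcov.parent c = Tcov.parent d) : Red3App Tcov Tom := by
  refine ⟨d, c, b, ⟨?_, ?_⟩, ⟨hcd.symm, hcd'.symm⟩, ⟨hbc.symm, F1.symm⟩⟩
  · exact isChain3 Tcov hcd.symm hbd.symm hbc.symm (Or.inl hcd'.symm)
      (F4.imp Eq.symm SimpleGraph.Adj.symm)
  · exact isChain3 Tom hcd.symm hbd.symm hbc.symm (F2.imp Eq.symm SimpleGraph.Adj.symm)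
      (Or.inl F1.symm)

/-- The collected tree-level facts produced by a `1|3` side, where `Tom` is the
tree whose spanning tree omits an edge and `Tcov` the covering one. -/
lemma oneThree_main (Tom Tcov : PhyloTree X) {a b c d : X}
    (hab : a ≠ b) (hac : a ≠ c) (had : a ≠ d) (hbc : b ≠ c) (hbd : b ≠ d) (hcd : c ≠ d)
    (F1 : Tom.parent b = Tom.parent c)
    (F2 : Tom.parent c = Tom.parent d ∨ Tom.graph.Adj (Tom.parent c) (Tom.parent d))
    (F3 : Tcov.parent a = Tcov.parent b ∨ Tcov.graph.Adj (Tcov.parent a) (Tcov.parent b))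
    (F4 : Tcov.parent b = Tcov.parent c ∨ Tcov.graph.Adj (Tcov.parent b) (Tcov.parent c))
    (F5 : Tcov.parent c = Tcov.parent d ∨ Tcov.graph.Adj (Tcov.parent c) (Tcov.parent d))
    (hbc' : Tcov.parent b ≠ Tcov.parent c)
    (hncd : Tcov.parent c ≠ Tcov.parent d) :
    commonChain Tcov Tom [b, c, d] ∧ Tom.cherry b c ∧ ¬ Tcov.pendantChain [b, c, d] ∧
      Tcov.isChain [a, b, c, d] ∧ ¬ Tom.isChain [a, b, c, d] := by
  refine ⟨⟨isChain3 Tcov hbc hbd hcd F4 F5, isChain3 Tom hbc hbd hcd (Or.inl F1) F2⟩,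
    ⟨hbc, F1⟩, not_pendant3 Tcov hbc' (fun h => hncd h.symm),
    isChain4 Tcov hab hac had hbc hbd hcd F3 F4 F5 hbc',
    not_isChain4 Tom F1⟩


open SimpleGraph

variable {X : Type} {N : PhyloNetwork X}

/-- the tree-level content of Reduction 8A data coming from one 1|3 side -/
def Half (T T' : PhyloTree X) (a b c d : X) : Prop :=
  commonChain T T' [b, c, d] ∧ T'.cherry b c ∧ ¬ T.pendantChain [b, c, d] ∧
    T.isChain [a, b, c, d] ∧ ¬ T'.isChain [a, b, c, d]

lemma side13_bridge (T T' : PhyloTree X) (E : SpanExt T N) (E' : SpanExt T' N)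
    (hirr7 : Irred7 T T') (S : NSide N) (a b c d : X)
    (hS13 : Side13 E.R E'.R S a b c d) :
    Half T T' a b c d ∨ Half T' T a b c d := by
  obtain ⟨hsupp, hbrk⟩ := hS13
  have h := sideFacts_of_support S a b c d hsupp
  have hab := h.taxaAB
  have hac := h.taxaAC
  have had := h.taxaAD
  have hbc := h.taxaBC
  have hbd := h.taxaBD
  have hcd := h.taxaCD
  have hABmem : s(N.parent a, N.parent b) ∈ S.walk.edges := by rw [h.hedges]; simp
  have hBCmem : s(N.parent b, N.parent c) ∈ S.walk.edges := by rw [h.hedges]; simp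
  have hCDmem : s(N.parent c, N.parent d) ∈ S.walk.edges := by rw [h.hedges]; simp
  have hBCne : s(N.parent b, N.parent c) ≠ s(N.parent a, N.parent b) := by
    simp only [ne_eq, Sym2.eq_iff, not_or]
    exact ⟨fun he => absurd he.1.symm h.dAB, fun he => absurd he.2.symm h.dAC⟩
  have hCDne : s(N.parent c, N.parent d) ≠ s(N.parent a, N.parent b) := by
    simp only [ne_eq, Sym2.eq_iff, not_or]
    exact ⟨fun he => absurd he.1.symm h.dAC, fun he => absurd he.1.symm h.dBC⟩
  rcases hbrk with ⟨hom, hcov⟩ | ⟨hom, hcov⟩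
  · -- E.R (for T) omits; T' covers
    have hRbc : s(N.parent b, N.parent c) ∈ E.R := hom.2 _ hBCmem hBCne
    have hRcd : s(N.parent c, N.parent d) ∈ E.R := hom.2 _ hCDmem hCDne
    have F1 : T.parent b = T.parent c := cherryB E h hom.1 hRbc
    have F2 := (stepCD E h hRcd).imp id And.left
    have F3 := (stepAB E' h (hcov _ hABmem)).imp id And.left
    have F4 := (stepBC E' h (hcov _ hBCmem)).imp id And.left
    have F5 := (stepCD E' h (hcov _ hCDmem)).imp id And.left
    have hbc' : T'.parent b ≠ T'.parent c := by
      intro heq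
      exact hirr7.1 (red1_of_double_cherry T T' hbc (hab.symm) (hac.symm) F1 heq)
    have hncd : T'.parent c ≠ T'.parent d := by
      intro heq
      exact hirr7.2.2.2.1 (red3_of T T' hbc hbd hcd F1 F2 F4 heq)
    obtain ⟨c1, c2, c3, c4, c5⟩ :=
      oneThree_main T T' hab hac had hbc hbd hcd F1 F2 F3 F4 F5 hbc' hncd
    exact Or.inr ⟨c1, c2, c3, c4, c5⟩
  · -- E'.R (for T') omits; T covers
    have hRbc : s(N.parent b, N.parent c) ∈ E'.R := hom.2 _ hBCmem hBCne
    have hRcd : s(N.parent c, N.parent d) ∈ E'.R := hom.2 _ hCDmem hCDne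
    have F1 : T'.parent b = T'.parent c := cherryB E' h hom.1 hRbc
    have F2 := (stepCD E' h hRcd).imp id And.left
    have F3 := (stepAB E h (hcov _ hABmem)).imp id And.left
    have F4 := (stepBC E h (hcov _ hBCmem)).imp id And.left
    have F5 := (stepCD E h (hcov _ hCDmem)).imp id And.left
    have hbc' : T.parent b ≠ T.parent c := by
      intro heq
      exact hirr7.1 (red1_of_double_cherry T T' hbc (hab.symm) (hac.symm) heq F1)
    have hncd : T.parent c ≠ T.parent d := by
      intro heq
      exact hirr7.2.2.1 (red3_of T' T hbc hbd hcd F1 F2 F4 heq)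
    obtain ⟨c1, c2, c3, c4, c5⟩ :=
      oneThree_main T' T hab hac had hbc hbd hcd F1 F2 F3 F4 F5 hbc' hncd
    exact Or.inl ⟨c1, c2, c3, c4, c5⟩


open SimpleGraph

variable {X : Type}

lemma eligibleP_symm {T T' : PhyloTree X} {a b c d : X}
    (h : eligibleP T T' a b c d) : eligibleP T' T a b c d := h.symm

/-- disjoint quadruples coming from a 1|3 side and any eligible quadruple give
Reduction 9.1 -/
lemma red9_of_half {T T' : PhyloTree X} {a b c d a' b' c' d' : X}
    (hh : Half T T' a b c d ∨ Half T' T a b c d)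
    (hdis : Disjoint ({a, b, c, d} : Set X) {a', b', c', d'})
    (he : eligibleP T T' a' b' c' d') : Red9App T T' := by
  rcases hh with ⟨cc, ch, np, c4, nc4⟩ | ⟨cc, ch, np, c4, nc4⟩
  · exact Or.inl ⟨a, b, c, d, a', b', c', d', cc, ch, np, c4, nc4, hdis, he⟩
  · exact Or.inr (Or.inl ⟨a, b, c, d, a', b', c', d', cc, ch, np, c4, nc4, hdis,
      eligibleP_symm he⟩)

lemma red8_of_halves {T T' : PhyloTree X} {a b c d a' b' c' d' : X}
    (h1 : Half T T' a b c d ∨ Half T' T a b c d)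
    (h2 : Half T T' a' b' c' d' ∨ Half T' T a' b' c' d')
    (hdis : Disjoint ({a, b, c, d} : Set X) {a', b', c', d'}) : Red8App T T' := by
  have hdis' : Disjoint ({b, c, d} : Set X) {b', c', d'} := by
    refine Set.disjoint_of_subset ?_ ?_ hdis <;> (intro x hx; simp at hx ⊢; tauto)
  have hcc2 : commonChain T T' [b', c', d'] ∧ commonChain T' T [b', c', d'] := by
    rcases h2 with ⟨cc, _⟩ | ⟨cc, _⟩
    · exact ⟨cc, ⟨cc.2, cc.1⟩⟩
    · exact ⟨⟨cc.2, cc.1⟩, cc⟩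
  rcases h1 with ⟨cc, ch, np, c4, nc4⟩ | ⟨cc, ch, np, c4, nc4⟩
  · exact ⟨a, b, c, d, b', c', d', Or.inl ⟨cc, hcc2.1, hdis', ch, np, c4, nc4⟩⟩
  · exact ⟨a, b, c, d, b', c', d', Or.inr ⟨cc, hcc2.2, hdis', ch, np, c4, nc4⟩⟩


/-- Lemma `l:atmost1`: the number of `2|2` sides decorated
with four taxa that are eligible for Operation P, plus the number of `1|3`
sides, is at most one. -/
theorem at_most_one_special_side {X : Type} (T T' : PhyloTree X)
    (hirr : Irred10 T T') (N : PhyloNetwork X)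
    (hT : Displays N T) (hT' : Displays N T')
    (hopt : N.retic = dTBR T T')
    (E : SpanExt T N) (E' : SpanExt T' N) :
    ({es : Set (Sym2 N.V) | ∃ S : NSide N, S.edgeSet = es ∧
        ∃ a b c d : X, Side13 E.R E'.R S a b c d}.ncard +
     {es : Set (Sym2 N.V) | ∃ S : NSide N, S.edgeSet = es ∧
        ∃ a b c d : X, Side22 E.R E'.R S a b c d ∧ eligibleP T T' a b c d}.ncard) ≤ 1 := by

  classical
  haveI : Finite N.V := N.finV
  obtain ⟨⟨⟨hirr7, hnot8⟩, hnot9⟩, _⟩ := hirr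
  set A : Set (Set (Sym2 N.V)) := {es | ∃ S : NSide N, S.edgeSet = es ∧
      ∃ a b c d : X, Side13 E.R E'.R S a b c d} with hA
  set B : Set (Set (Sym2 N.V)) := {es | ∃ S : NSide N, S.edgeSet = es ∧
      ∃ a b c d : X, Side22 E.R E'.R S a b c d ∧ eligibleP T T' a b c d} with hB
  -- the common analysis of two decorated sides
  have key : ∀ (S₁ S₂ : NSide N) (a₁ b₁ c₁ d₁ a₂ b₂ c₂ d₂ : X),
      (Side13 E.R E'.R S₁ a₁ b₁ c₁ d₁ ∨
        (Side22 E.R E'.R S₁ a₁ b₁ c₁ d₁ ∧ eligibleP T T' a₁ b₁ c₁ d₁)) →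
      (Side13 E.R E'.R S₂ a₂ b₂ c₂ d₂ ∨
        (Side22 E.R E'.R S₂ a₂ b₂ c₂ d₂ ∧ eligibleP T T' a₂ b₂ c₂ d₂)) →
      S₂.edgeSet = S₁.edgeSet ∧
        (SidesAligned S₁ S₂ a₁ b₁ c₁ d₁ a₂ b₂ c₂ d₂ ∨
          SidesRev S₁ S₂ a₁ b₁ c₁ d₁ a₂ b₂ c₂ d₂) := by
    intro S₁ S₂ a₁ b₁ c₁ d₁ a₂ b₂ c₂ d₂ k₁ k₂
    have hsupp₁ : S₁.walk.support =
        [S₁.u, N.parent a₁, N.parent b₁, N.parent c₁, N.parent d₁, S₁.w] := by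
      rcases k₁ with h | ⟨h, _⟩ <;> exact h.1
    have hsupp₂ : S₂.walk.support =
        [S₂.u, N.parent a₂, N.parent b₂, N.parent c₂, N.parent d₂, S₂.w] := by
      rcases k₂ with h | ⟨h, _⟩ <;> exact h.1
    have hF₁ := sideFacts_of_support S₁ a₁ b₁ c₁ d₁ hsupp₁
    have hF₂ := sideFacts_of_support S₂ a₂ b₂ c₂ d₂ hsupp₂
    by_cases hdis : Disjoint ({a₁, b₁, c₁, d₁} : Set X) {a₂, b₂, c₂, d₂}
    · exfalso
      rcases k₁ with h1 | ⟨h1, e1⟩ <;> rcases k₂ with h2 | ⟨h2, e2⟩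
      · exact hnot8 (red8_of_halves
          (side13_bridge T T' E E' hirr7 S₁ a₁ b₁ c₁ d₁ h1)
          (side13_bridge T T' E E' hirr7 S₂ a₂ b₂ c₂ d₂ h2) hdis)
      · exact hnot9 (red9_of_half
          (side13_bridge T T' E E' hirr7 S₁ a₁ b₁ c₁ d₁ h1) hdis e2)
      · exact hnot9 (red9_of_half
          (side13_bridge T T' E E' hirr7 S₂ a₂ b₂ c₂ d₂ h2) hdis.symm e1)
      · exact hnot9 (Or.inr (Or.inr
          ⟨a₁, b₁, c₁, d₁, a₂, b₂, c₂, d₂, hdis, e1, e2⟩))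
    · have hrel := sides_trichotomy hF₁ hF₂ hdis
      exact ⟨edgeSet_eq_of_rel hF₁ hF₂ hrel, hrel⟩
  -- a 1|3 and a 2|2 structure can never coincide
  have hABdisj : ∀ es, es ∈ A → es ∈ B → False := by
    intro es hesA hesB
    obtain ⟨S₁, hS₁, a₁, b₁, c₁, d₁, h13⟩ := hesA
    obtain ⟨S₂, hS₂, a₂, b₂, c₂, d₂, h22, he22⟩ := hesB
    obtain ⟨hes, hrel⟩ := key S₁ S₂ a₁ b₁ c₁ d₁ a₂ b₂ c₂ d₂ (Or.inl h13)
      (Or.inr ⟨h22, he22⟩)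
    have hF₁ := sideFacts_of_support S₁ a₁ b₁ c₁ d₁ h13.1
    have hF₂ := sideFacts_of_support S₂ a₂ b₂ c₂ d₂ h22.1
    have hmid : s(N.parent b₂, N.parent c₂) = s(N.parent b₁, N.parent c₁) := by
      rcases hrel with ⟨_, tb, tc, _⟩ | ⟨_, tb, tc, _⟩
      · rw [tb, tc]
      · rw [tb, tc]; exact Sym2.eq_swap
    have hmemiff : ∀ e : Sym2 N.V, e ∈ S₂.walk.edges ↔ e ∈ S₁.walk.edges := by
      intro e
      have := Set.ext_iff.mp hes e
      exact this
    have hmidmem₁ : s(N.parent b₂, N.parent c₂) ∈ S₁.walk.edges := by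
      rw [hmid, hF₁.hedges]; simp
    have hmidmem₂ : s(N.parent b₁, N.parent c₁) ∈ S₂.walk.edges := by
      rw [← hmid]
      exact (hmemiff _).mpr hmidmem₁
    have hmidne : s(N.parent b₂, N.parent c₂) ≠ s(N.parent a₁, N.parent b₁) := by
      rw [hmid]
      simp only [ne_eq, Sym2.eq_iff, not_or]
      exact ⟨fun he => absurd he.1.symm hF₁.dAB, fun he => absurd he.2.symm hF₁.dAC⟩
    have he₁mem₂ : s(N.parent a₁, N.parent b₁) ∈ S₂.walk.edges := by
      refine (hmemiff _).mpr ?_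
      rw [hF₁.hedges]; simp
    rcases h13.2 with ⟨hom1, hcov1⟩ | ⟨hom1, hcov1⟩ <;>
      rcases h22.2 with ⟨hom2, hcov2⟩ | ⟨hom2, hcov2⟩
    · exact hom2.1 (hom1.2 _ hmidmem₁ hmidne)
    · exact hom2.1 (hcov1 _ hmidmem₁)
    · exact hom2.1 (hcov1 _ hmidmem₁)
    · exact hom2.1 (hom1.2 _ hmidmem₁ hmidne)
  -- subsingleton of the union
  have hsub : (A ∪ B).Subsingleton := by
    intro es₁ h1 es₂ h2
    obtain ⟨S₁, hS₁, a₁, b₁, c₁, d₁, k₁⟩ : ∃ S : NSide N, S.edgeSet = es₁ ∧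
        ∃ a b c d : X, (Side13 E.R E'.R S a b c d ∨
          (Side22 E.R E'.R S a b c d ∧ eligibleP T T' a b c d)) := by
      rcases h1 with ⟨S, hS, a, b, c, d, h⟩ | ⟨S, hS, a, b, c, d, h⟩
      · exact ⟨S, hS, a, b, c, d, Or.inl h⟩
      · exact ⟨S, hS, a, b, c, d, Or.inr h⟩
    obtain ⟨S₂, hS₂, a₂, b₂, c₂, d₂, k₂⟩ : ∃ S : NSide N, S.edgeSet = es₂ ∧
        ∃ a b c d : X, (Side13 E.R E'.R S a b c d ∨
          (Side22 E.R E'.R S a b c d ∧ eligibleP T T' a b c d)) := by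
      rcases h2 with ⟨S, hS, a, b, c, d, h⟩ | ⟨S, hS, a, b, c, d, h⟩
      · exact ⟨S, hS, a, b, c, d, Or.inl h⟩
      · exact ⟨S, hS, a, b, c, d, Or.inr h⟩
    have := (key S₁ S₂ a₁ b₁ c₁ d₁ a₂ b₂ c₂ d₂ k₁ k₂).1
    rw [← hS₁, ← hS₂, this]
  -- finish by counting
  rcases Set.Subsingleton.eq_empty_or_singleton hsub with hempty | ⟨e, hsing⟩
  · have hAempty : A = ∅ := Set.subset_eq_empty (hempty ▸ Set.subset_union_left) rfl
    have hBempty : B = ∅ := Set.subset_eq_empty (hempty ▸ Set.subset_union_right) rfl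
    rw [hAempty, hBempty]
    simp
  · have hAsub : A ⊆ {e} := hsing ▸ Set.subset_union_left
    have hBsub : B ⊆ {e} := hsing ▸ Set.subset_union_right
    by_cases hAe : e ∈ A
    · have hBempty : B = ∅ := by
        rw [Set.eq_empty_iff_forall_notMem]
        intro x hx
        have : x = e := hBsub hx
        exact hABdisj e hAe (this ▸ hx)
      rw [hBempty]
      simp only [Set.ncard_empty, add_zero]
      exact le_trans (Set.ncard_le_ncard hAsub (Set.toFinite _))
        (by rw [Set.ncard_singleton])
    · have hAempty : A = ∅ := by
        rw [Set.eq_empty_iff_forall_notMem]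
        intro x hx
        have : x = e := hAsub hx
        exact hAe (this ▸ hx)
      rw [hAempty]
      simp only [Set.ncard_empty, zero_add]
      exact le_trans (Set.ncard_le_ncard hBsub (Set.toFinite _))
        (by rw [Set.ncard_singleton])
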